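/- arXiv:math/0508240 — 2 statements merged into one kernel-verified Lean document; each statement's English description precedes it below -/
import Mathlib

section
/- Let B be a circuitous base of a matroid M. For any two flags F and F' of flats of M, all of whose flats are spanned by subsets of B, one has M_F = M_{F'} if and only if T_F = T_{F'} (the associated labelled forests coincide as labelled posets). -/
open Set Matroid

namespace BergmanPaper

variable {α : Type*}

/-- A circuit of a matroid: a minimal dependent set. -/
def MCircuit (M : Matroid α) (C : Set α) : Prop :=
  M.Dep C ∧ ∀ x ∈ C, M.Indep (C \ {x})

/-- The rank of a set in a matroid (supremum of cardinalities of independent subsets). -/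
noncomputable def mrank (M : Matroid α) (X : Set α) : ℕ :=
  sSup {n | ∃ I, M.Indep I ∧ I ⊆ X ∧ I.ncard = n}

/-- Two elements are connected in `M` if they are joined by a chain of circuits. -/
def ConnTo (M : Matroid α) : α → α → Prop :=
  Relation.ReflTransGen fun x y => ∃ C, MCircuit M C ∧ x ∈ C ∧ y ∈ C

/-- A connected matroid: nonempty ground set, any two elements joined by circuits. -/
def MConnected (M : Matroid α) : Prop :=
  M.E.Nonempty ∧ ∀ e ∈ M.E, ∀ f ∈ M.E, ConnTo M e f

/-- `C` is a connected component of the restriction of `M` to `F`. -/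
def IsCompOf (M : Matroid α) (C F : Set α) : Prop :=
  ∃ e ∈ F, C = {f | f ∈ F ∧ ConnTo (M ↾ F) e f}

/-- Independence in the minor `(M ↾ G) ／ F` (restrict to `G`, then contract `F ⊆ G`):
`I` is independent iff `I ⊆ G \ F` and `I ∪ J` is independent for a basis `J` of `F`. -/
def minorIndep (M : Matroid α) (G F I : Set α) : Prop :=
  I ⊆ G \ F ∧ ∃ J, M.IsBasis J F ∧ M.Indep (I ∪ J)

/-- `F` is spanned by a subset of `B`. -/
def SpannedBy (M : Matroid α) (F B : Set α) : Prop :=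
  ∃ I ⊆ B, M.closure I = F

/-- A base `B` is circuitous if every connected flat spanned by a subset of `B` is
spanned by the basic circuit `circ(B, e)` for some `e ∈ E \ B`. -/
def Circuitous (M : Matroid α) (B : Set α) : Prop :=
  M.IsBase B ∧ ∀ F, M.IsFlat F → MConnected (M ↾ F) → SpannedBy M F B →
    ∃ e ∈ M.E \ B, ∃ C, C ⊆ insert e B ∧ MCircuit M C ∧ M.closure C = F

/-- A flag of flats `∅ = F₀ ⊂ F₁ ⊂ ⋯ ⊂ F_k ⊂ F_{k+1} = E`. -/
structure IsFlag (M : Matroid α) (k : ℕ) (Fl : Fin (k + 2) → Set α) : Prop where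
  first : Fl 0 = ∅
  last : Fl (Fin.last (k + 1)) = M.E
  mono : StrictMono Fl
  flat : ∀ i, i ≠ 0 → M.IsFlat (Fl i)

/-- Independence in the matroid `M_𝓕 = ⊕ᵢ (M ↾ Fᵢ) ／ Fᵢ₋₁` associated to a flag. -/
def flagIndep (M : Matroid α) (k : ℕ) (Fl : Fin (k + 2) → Set α) (I : Set α) : Prop :=
  I ⊆ M.E ∧ ∀ i : Fin (k + 1),
    minorIndep M (Fl i.succ) (Fl i.castSucc) (I ∩ (Fl i.succ \ Fl i.castSucc))

/-- The labels of the forest `T_𝓕`: all connected components of all flats in the flag. -/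
def forestLabels (M : Matroid α) (k : ℕ) (Fl : Fin (k + 2) → Set α) : Set (Set α) :=
  {C | ∃ i, IsCompOf M C (Fl i)}

/-- The join of a family of flats in the lattice of flats. -/
def flatJoin (M : Matroid α) (A : Set (Set α)) : Set α :=
  M.closure (⋃₀ A)

/-- A nested set: a set of connected flats such that the join of every antichain with at
least two elements is not connected. -/
def IsNestedSet (M : Matroid α) (N : Set (Set α)) : Prop :=
  (∀ F ∈ N, M.IsFlat F ∧ MConnected (M ↾ F)) ∧
    ∀ A ⊆ N, IsAntichain (· ⊆ ·) A → ¬ A.Subsingleton →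
      ¬ MConnected (M ↾ flatJoin M A)

/-- A chain of flats of `M`. -/
def IsFlagChain (M : Matroid α) (k : ℕ) (Fl : Fin k → Set α) : Prop :=
  (∀ i, M.IsFlat (Fl i)) ∧ StrictMono Fl

/-- The labels of the forest of a chain of flats. -/
def chainLabels (M : Matroid α) (k : ℕ) (Fl : Fin k → Set α) : Set (Set α) :=
  {C | ∃ i, IsCompOf M C (Fl i)}

/-- `μ` is the Möbius function of the lattice of flats of `M`, computed from the bottom. -/
def IsMobius (M : Matroid α) (μ : Set α → ℤ) : Prop :=
  μ (M.closure ∅) = 1 ∧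
    ∀ X, M.IsFlat X → X ≠ M.closure ∅ → (∑ᶠ Y ∈ {Y | M.IsFlat Y ∧ Y ⊆ X}, μ Y) = 0

/-- The beta invariant `β(M) = (−1)^{r(M)} Σ_X μ(X) r(X)`, the sum over all flats. -/
noncomputable def betaInv (M : Matroid α) (μ : Set α → ℤ) : ℤ :=
  (-1) ^ mrank M M.E * ∑ᶠ X ∈ {X | M.IsFlat X}, μ X * (mrank M X : ℤ)

variable {M : Matroid α} {B C D I J K X Y F F' : Set α} {x y z e : α}

/-! ### Basic circuit lemmas -/

lemma MCircuit.subset_ground (h : MCircuit M C) : C ⊆ M.E := h.1.subset_ground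

lemma MCircuit.nonempty (h : MCircuit M C) : C.Nonempty := h.1.nonempty

lemma MCircuit.mem_closure (h : MCircuit M C) (hx : x ∈ C) : x ∈ M.closure (C \ {x}) := by
  by_contra hcl
  have hxE : x ∈ M.E := h.subset_ground hx
  have hI := h.2 x hx
  have : M.Indep (insert x (C \ {x})) := by
    rw [hI.insert_indep_iff_of_notMem (by simp)]
    exact ⟨hxE, hcl⟩
  rw [insert_diff_singleton, insert_eq_of_mem hx] at this
  exact h.1.not_indep this

/-- Fundamental circuit existence. -/
lemma exists_mcircuit_of_indep (hJ : M.Indep J) (hx : x ∈ M.closure J) (hxJ : x ∉ J) :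
    MCircuit M (insert x {y ∈ J | x ∉ M.closure (J \ {y})}) ∧
      x ∈ M.closure {y ∈ J | x ∉ M.closure (J \ {y})} := by
  have hxE : x ∈ M.E := M.closure_subset_ground J hx
  set S : Set α := {y ∈ J | x ∉ M.closure (J \ {y})} with hS
  have hSJ : S ⊆ J := sep_subset _ _
  have hxS : x ∉ S := fun h => hxJ (hSJ h)
  -- main claim : x ∈ M.closure S
  have hmain : x ∈ M.closure S := by
    by_contra hxcl
    have hiSx : M.Indep (insert x S) := by
      rw [(hJ.subset hSJ).insert_indep_iff_of_notMem hxS]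
      exact ⟨hxE, hxcl⟩
    have hA : insert x S ⊆ insert x J := insert_subset_insert hSJ
    have hAE : insert x J ⊆ M.E := insert_subset hxE hJ.subset_ground
    obtain ⟨W, hW, hSW⟩ := hiSx.subset_isBasis_of_subset hA hAE
    have hxW : x ∈ W := hSW (mem_insert _ _)
    have hYJ' : ∀ y ∈ J, y ∉ W → x ∈ M.closure (J \ {y}) := by
      intro y hy hyW
      by_contra hyc
      exact hyW (hSW (Or.inr ⟨hy, hyc⟩))
    have hAdep : M.Dep (insert x J) := by
      rw [hJ.insert_dep_iff]; exact ⟨hx, hxJ⟩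
    have hYne : ∃ y ∈ J, y ∉ W := by
      by_contra hc
      push_neg at hc
      have : insert x J ⊆ W := insert_subset hxW hc
      exact hAdep.not_indep (hW.indep.subset (hW.subset.antisymm this ▸ Subset.rfl))
    obtain ⟨y, hyJ, hyW⟩ := hYne
    have hxcy : x ∈ M.closure (J \ {y}) := hYJ' y hyJ hyW
    have hWsub : W ⊆ M.closure (J \ {y}) := by
      intro w hw
      rcases hW.subset hw with (rfl | hwJ)
      · exact hxcy
      · have hwy : w ≠ y := fun h => hyW (h ▸ hw)
        exact M.subset_closure (J \ {y}) (diff_subset.trans hJ.subset_ground) ⟨hwJ, hwy⟩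
    have : y ∈ M.closure (J \ {y}) := by
      have hyA : y ∈ M.closure W := hW.subset_closure (Or.inr hyJ)
      exact M.closure_subset_closure_of_subset_closure hWsub hyA
    exact hJ.notMem_closure_diff_of_mem hyJ this
  constructor
  · constructor
    · rw [(hJ.subset hSJ).insert_dep_iff]
      exact ⟨hmain, hxS⟩
    · intro z hz
      rcases hz with (rfl | ⟨hzJ, hzc⟩)
      · have : insert z S \ {z} = S \ {z} := by
          rw [insert_diff_of_mem _ (mem_singleton z)]
        rw [this]
        exact (hJ.subset hSJ).subset diff_subset
      · have hzx : z ≠ x := fun h => hxJ (h ▸ hzJ)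
        have heq : insert x S \ {z} = insert x (S \ {z}) := by
          rw [insert_diff_of_notMem _ (by simp [hzx.symm])]
        rw [heq]
        have hind : M.Indep (S \ {z}) := (hJ.subset hSJ).subset diff_subset
        rw [hind.insert_indep_iff_of_notMem (fun h => hxS h.1)]
        refine ⟨hxE, fun hc => hzc (M.closure_subset_closure ?_ hc)⟩
        exact diff_subset_diff_left hSJ
  · exact hmain

lemma exists_mcircuit_of_mem_closure (hX : X ⊆ M.E) (hx : x ∈ M.closure X) (hxX : x ∉ X) :
    ∃ K, MCircuit M K ∧ x ∈ K ∧ K \ {x} ⊆ X := by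
  obtain ⟨J, hJ⟩ := M.exists_isBasis X hX
  have hxJ : x ∉ J := fun h => hxX (hJ.subset h)
  have hxc : x ∈ M.closure J := by rw [hJ.closure_eq_closure]; exact hx
  obtain ⟨hK, -⟩ := exists_mcircuit_of_indep hJ.indep hxc hxJ
  refine ⟨_, hK, mem_insert _ _, ?_⟩
  intro z hz
  rcases hz.1 with (rfl | hzS)
  · exact absurd rfl hz.2
  · exact hJ.subset (hzS.1)

/-- Intersection of two closures of subsets of an independent set. -/
lemma closure_inter_closure_of_subset_indep (hB : M.Indep B) (hX : X ⊆ B) (hY : Y ⊆ B) :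
    M.closure X ∩ M.closure Y = M.closure (X ∩ Y) := by
  refine subset_antisymm ?_ (subset_inter (M.closure_subset_closure inter_subset_left)
    (M.closure_subset_closure inter_subset_right))
  rintro z ⟨hzX, hzY⟩
  have hXE : X ⊆ M.E := hX.trans hB.subset_ground
  have hYE : Y ⊆ M.E := hY.trans hB.subset_ground
  by_cases hzmX : z ∈ X
  · by_cases hzmY : z ∈ Y
    · exact M.subset_closure _ ((inter_subset_left).trans hXE) ⟨hzmX, hzmY⟩
    · exfalso
      have hsub : Y ⊆ B \ {z} := fun w hw => ⟨hY hw, fun h => hzmY (h ▸ hw)⟩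
      have : z ∈ M.closure (B \ {z}) := M.closure_subset_closure hsub hzY
      exact hB.notMem_closure_diff_of_mem (hX hzmX) this
  · obtain ⟨K, hK, hzK, hKX⟩ := exists_mcircuit_of_mem_closure hXE hzX hzmX
    have hzS : z ∈ M.closure (K \ {z}) := hK.mem_closure hzK
    by_cases hSY : K \ {z} ⊆ Y
    · have hsub : K \ {z} ⊆ X ∩ Y := fun w hw => ⟨hKX hw, hSY hw⟩
      exact M.closure_subset_closure hsub hzS
    · exfalso
      obtain ⟨b, hbS, hbY⟩ := not_subset.1 hSY
      have hbB : b ∈ B := hX (hKX hbS)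
      have hbz : b ≠ z := hbS.2
      have h1 : b ∈ M.closure (K \ {b}) := hK.mem_closure hbS.1
      have h2 : K \ {b} ⊆ insert z ((K \ {z}) \ {b}) := by
        intro w hw
        by_cases hwz : w = z
        · exact hwz ▸ mem_insert _ _
        · exact Or.inr ⟨⟨hw.1, hwz⟩, hw.2⟩
      have h3 : b ∈ M.closure (insert z ((K \ {z}) \ {b})) :=
        M.closure_subset_closure h2 h1
      have h4 : insert z ((K \ {z}) \ {b}) ⊆ M.closure ((B \ {b}) ) := by
        refine insert_subset ?_ ?_
        · have hsub : Y ⊆ B \ {b} := fun w hw => ⟨hY hw, fun h => hbY (h ▸ hw)⟩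
          exact M.closure_subset_closure hsub hzY
        · intro w hw
          refine M.subset_closure _ (diff_subset.trans hB.subset_ground) ⟨hX (hKX hw.1), hw.2⟩
      have : b ∈ M.closure (B \ {b}) :=
        M.closure_subset_closure_of_subset_closure h4 h3
      exact hB.notMem_closure_diff_of_mem hbB this

/-! ### Connectivity and components -/

lemma connTo_symm {N : Matroid α} (h : ConnTo N x y) : ConnTo N y x := by
  refine @Std.Symm.symm _ _ (@Relation.ReflTransGen.symmetric _ _ ⟨?_⟩) _ _ h
  rintro a b ⟨K, hK, haK, hbK⟩
  exact ⟨K, hK, hbK, haK⟩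

lemma connTo_trans {N : Matroid α} (h : ConnTo N x y) (h' : ConnTo N y z) : ConnTo N x z :=
  h.trans h'

lemma mcircuit_restrict_intro {R : Set α} (hK : MCircuit M K) (hKR : K ⊆ R) :
    MCircuit (M ↾ R) K := by
  refine ⟨?_, fun w hw => ?_⟩
  · rw [restrict_dep_iff]
    exact ⟨hK.1.not_indep, hKR⟩
  · rw [restrict_indep_iff]
    exact ⟨hK.2 w hw, diff_subset.trans hKR⟩

lemma mcircuit_restrict_elim {R : Set α} (hR : R ⊆ M.E) (hK : MCircuit (M ↾ R) K) :
    MCircuit M K ∧ K ⊆ R := by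
  obtain ⟨hdep, hmin⟩ := hK
  have hKR : K ⊆ R := hdep.subset_ground
  rw [restrict_dep_iff] at hdep
  refine ⟨⟨⟨hdep.1, hKR.trans hR⟩, fun w hw => ?_⟩, hKR⟩
  exact ((restrict_indep_iff).1 (hmin w hw)).1

lemma mcircuit_restrict_mono {R R' : Set α} (hR' : R' ⊆ R) (hR : R ⊆ M.E)
    (hK : MCircuit (M ↾ R') K) : MCircuit (M ↾ R) K := by
  obtain ⟨h1, h2⟩ := mcircuit_restrict_elim (hR'.trans hR) hK
  exact mcircuit_restrict_intro h1 (h2.trans hR')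

lemma connTo_mono {R R' : Set α} (hR' : R' ⊆ R) (hR : R ⊆ M.E)
    (h : ConnTo (M ↾ R') x y) : ConnTo (M ↾ R) x y := by
  induction h with
  | refl => exact Relation.ReflTransGen.refl
  | tail _ hbc ih =>
      obtain ⟨K, hK, h1, h2⟩ := hbc
      exact ih.tail ⟨K, mcircuit_restrict_mono hR' hR hK, h1, h2⟩

/-- The component of `x` in `M ↾ F`. -/
def compOf (M : Matroid α) (x : α) (F : Set α) : Set α :=
  {f | f ∈ F ∧ ConnTo (M ↾ F) x f}

lemma mem_compOf_self (hx : x ∈ F) : x ∈ compOf M x F :=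
  ⟨hx, Relation.ReflTransGen.refl⟩

lemma compOf_subset : compOf M x F ⊆ F := fun _ h => h.1

lemma isCompOf_compOf (hx : x ∈ F) : IsCompOf M (compOf M x F) F :=
  ⟨x, hx, rfl⟩

lemma IsCompOf.subset (h : IsCompOf M C F) : C ⊆ F := by
  obtain ⟨e, he, rfl⟩ := h; exact fun _ hf => hf.1

lemma IsCompOf.nonempty (h : IsCompOf M C F) : C.Nonempty := by
  obtain ⟨e, he, rfl⟩ := h; exact ⟨e, mem_compOf_self he⟩

lemma compOf_eq_of_mem (hx : x ∈ F) (hy : y ∈ compOf M x F) :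
    compOf M y F = compOf M x F := by
  ext w
  constructor
  · rintro ⟨hwF, hconn⟩
    exact ⟨hwF, connTo_trans hy.2 hconn⟩
  · rintro ⟨hwF, hconn⟩
    exact ⟨hwF, connTo_trans (connTo_symm hy.2) hconn⟩

lemma IsCompOf.eq_compOf (h : IsCompOf M C F) (hx : x ∈ C) : C = compOf M x F := by
  obtain ⟨e, he, rfl⟩ := h
  exact (compOf_eq_of_mem he hx).symm

/-- Any circuit of `M ↾ F` meeting a component is contained in it. -/
lemma mcircuit_subset_compOf (hx : x ∈ F) (hK : MCircuit (M ↾ F) K) (hw : w ∈ K)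
    (hwc : w ∈ compOf M x F) : K ⊆ compOf M x F := by
  intro u hu
  have hKF : K ⊆ F := hK.1.subset_ground
  exact ⟨hKF hu, connTo_trans hwc.2 (Relation.ReflTransGen.single ⟨K, hK, hw, hu⟩)⟩

/-- Connectivity is realized inside the component. -/
lemma connTo_compOf (hFE : F ⊆ M.E) (hx : x ∈ F) (h : ConnTo (M ↾ F) x y) :
    ConnTo (M ↾ compOf M x F) x y := by
  induction h with
  | refl => exact Relation.ReflTransGen.refl
  | tail hab hbc ih =>
      obtain ⟨K, hK, h1, h2⟩ := hbc
      have hb : _ ∈ compOf M x F := ⟨hK.1.subset_ground h1, hab⟩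
      have hKsub : K ⊆ compOf M x F := mcircuit_subset_compOf hx hK h1 hb
      have hK' : MCircuit (M ↾ compOf M x F) K :=
        mcircuit_restrict_intro (mcircuit_restrict_elim hFE hK).1 hKsub
      exact ih.tail ⟨K, hK', h1, h2⟩

lemma IsCompOf.connTo_self (hFE : F ⊆ M.E) (h : IsCompOf M C F) (hx : x ∈ C) (hy : y ∈ C) :
    ConnTo (M ↾ C) x y := by
  obtain ⟨e, he, rfl⟩ := h
  have h1 : ConnTo (M ↾ compOf M e F) e x := connTo_compOf hFE he hx.2
  have h2 : ConnTo (M ↾ compOf M e F) e y := connTo_compOf hFE he hy.2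
  exact connTo_trans (connTo_symm h1) h2

lemma IsCompOf.mconnected (hFE : F ⊆ M.E) (h : IsCompOf M C F) : MConnected (M ↾ C) := by
  refine ⟨?_, ?_⟩
  · rw [restrict_ground_eq]; exact h.nonempty
  · intro a ha b hb
    rw [restrict_ground_eq] at ha hb
    exact h.connTo_self hFE ha hb

/-- Components are monotone under enlarging the set. -/
lemma IsCompOf.subset_of_le (hFE : F ⊆ M.E) (hF' : F' ⊆ F) (hC : IsCompOf M C F')
    (hC'' : IsCompOf M C'' F) (hz : z ∈ C ∩ C'') : C ⊆ C'' := by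
  intro u hu
  have h1 : ConnTo (M ↾ C) z u := hC.connTo_self (hF'.trans hFE) hz.1 hu
  have h2 : ConnTo (M ↾ F) z u := connTo_mono (hC.subset.trans hF') hFE h1
  rw [hC''.eq_compOf hz.2]
  exact ⟨(hC.subset.trans hF') hu, connTo_trans ((hC''.eq_compOf hz.2) ▸ hz.2).2 h2⟩

/-- A component of a bigger set contained in a smaller set is a component of it. -/
lemma IsCompOf.of_subset (hFE : F ⊆ M.E) (hF' : F' ⊆ F) (h : IsCompOf M C F)
    (hCF' : C ⊆ F') : IsCompOf M C F' := by
  obtain ⟨e, he, heq⟩ := h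
  have hCcomp : IsCompOf M C F := ⟨e, he, heq⟩
  have heC : e ∈ C := heq ▸ mem_compOf_self he
  refine ⟨e, hCF' heC, ?_⟩
  ext w
  constructor
  · intro hw
    have hcw : ConnTo (M ↾ C) e w := hCcomp.connTo_self hFE heC hw
    exact ⟨hCF' hw, connTo_mono hCF' (hF'.trans hFE) hcw⟩
  · rintro ⟨hwF', hconn⟩
    have : ConnTo (M ↾ F) e w := connTo_mono hF' hFE hconn
    exact heq ▸ ⟨hF' hwF', this⟩

/-- A component of a closed set is closed. -/
lemma IsCompOf.closure_eq (hFE : F ⊆ M.E) (hF : M.closure F = F) (hl : M.closure ∅ = ∅)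
    (h : IsCompOf M C F) : M.closure C = C := by
  refine subset_antisymm ?_ (M.subset_closure C (h.subset.trans hFE))
  intro z hz
  by_cases hzC : z ∈ C
  · exact hzC
  exfalso
  have hzF : z ∈ F := hF ▸ M.closure_subset_closure h.subset hz
  obtain ⟨K, hK, hzK, hKC⟩ := exists_mcircuit_of_mem_closure (h.subset.trans hFE) hz hzC
  have hKne : (K \ {z}).Nonempty := by
    rcases (K \ {z}).eq_empty_or_nonempty with hemp | hne
    · exfalso
      have := hK.mem_closure hzK
      rw [hemp, hl] at this
      exact absurd this (notMem_empty z)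
    · exact hne
  obtain ⟨w, hw⟩ := hKne
  have hwC : w ∈ C := hKC hw
  have hKF : K ⊆ F := by
    intro u hu
    by_cases huz : u = z
    · exact huz ▸ hzF
    · exact h.subset (hKC ⟨hu, huz⟩)
  have hKr : MCircuit (M ↾ F) K := mcircuit_restrict_intro hK hKF
  have hconn : ConnTo (M ↾ F) w z := Relation.ReflTransGen.single ⟨K, hKr, hw.1, hzK⟩
  have : z ∈ compOf M w F := ⟨hzF, hconn⟩
  rw [← h.eq_compOf hwC] at this
  exact hzC this

/-- A component of a `B`-spanned closed set is spanned by `B ∩ C`. -/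
lemma IsCompOf.subset_closure_inter (hFE : F ⊆ M.E) (hsp : M.closure (B ∩ F) = F)
    (h : IsCompOf M C F) : C ⊆ M.closure (B ∩ C) := by
  intro x hx
  obtain ⟨J, hJ⟩ := M.exists_isBasis (B ∩ F) ((inter_subset_right).trans hFE)
  have hJcl : M.closure J = F := by rw [hJ.closure_eq_closure, hsp]
  by_cases hxJ : x ∈ J
  · exact M.subset_closure (B ∩ C) ((inter_subset_right).trans (h.subset.trans hFE))
      ⟨(hJ.subset hxJ).1, hx⟩
  · have hxcl : x ∈ M.closure J := hJcl ▸ h.subset hx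
    obtain ⟨hK, hxS0⟩ := exists_mcircuit_of_indep hJ.indep hxcl hxJ
    set S := {y ∈ J | x ∉ M.closure (J \ {y})}
    have hSJ : S ⊆ J := sep_subset _ _
    have hKF : insert x S ⊆ F := insert_subset (h.subset hx)
      (fun u hu => (hJ.subset (hSJ hu)).2)
    have hKr : MCircuit (M ↾ F) (insert x S) := mcircuit_restrict_intro hK hKF
    have hSC : S ⊆ C := by
      intro u hu
      have hconn : ConnTo (M ↾ F) x u :=
        Relation.ReflTransGen.single ⟨_, hKr, mem_insert _ _, Or.inr hu⟩
      have : u ∈ compOf M x F := ⟨hKF (Or.inr hu), hconn⟩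
      rw [← h.eq_compOf hx] at this
      exact this
    have hsub : S ⊆ B ∩ C := fun u hu => ⟨(hJ.subset (hSJ hu)).1, hSC hu⟩
    exact M.closure_subset_closure hsub hxS0

/-- Independence can be checked on components. -/
lemma indep_of_forall_inter_comp_indep (hFE : F ⊆ M.E) (hX : X ⊆ F)
    (h : ∀ Cc, IsCompOf M Cc F → M.Indep (X ∩ Cc)) : M.Indep X := by
  obtain ⟨J, hJ⟩ := M.exists_isBasis X (hX.trans hFE)
  by_cases hXJ : X ⊆ J
  · exact hJ.indep.subset hXJ
  obtain ⟨x, hxX, hxJ⟩ := not_subset.1 hXJ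
  exfalso
  have hxcl : x ∈ M.closure J := hJ.subset_closure hxX
  obtain ⟨hK, -⟩ := exists_mcircuit_of_indep hJ.indep hxcl hxJ
  set S := {y ∈ J | x ∉ M.closure (J \ {y})}
  have hSJ : S ⊆ J := sep_subset _ _
  have hKX : insert x S ⊆ X := insert_subset hxX (fun u hu => hJ.subset (hSJ hu))
  have hKF : insert x S ⊆ F := hKX.trans hX
  have hKr : MCircuit (M ↾ F) (insert x S) := mcircuit_restrict_intro hK hKF
  have hxF : x ∈ F := hX hxX
  have hKc : insert x S ⊆ compOf M x F :=
    mcircuit_subset_compOf hxF hKr (mem_insert _ _) (mem_compOf_self hxF)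
  have := h (compOf M x F) (isCompOf_compOf hxF)
  exact hK.1.not_indep (this.subset (subset_inter hKX hKc))

/-- The closure of any set is a flat. -/
lemma flat_closure (M : Matroid α) (X : Set α) : M.IsFlat (M.closure X) := by
  have h : M.closure X = ⋂₀ {F | M.IsFlat F ∧ X ∩ M.E ⊆ F} := M.closure_def X
  have hne : Nonempty {F // M.IsFlat F ∧ X ∩ M.E ⊆ F} :=
    ⟨⟨M.E, M.ground_isFlat, inter_subset_right⟩⟩
  have : M.IsFlat (⋂ F : {F // M.IsFlat F ∧ X ∩ M.E ⊆ F}, F.1) :=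
    Matroid.IsFlat.iInter (fun F => F.2.1)
  have heq : (⋂ F : {F // M.IsFlat F ∧ X ∩ M.E ⊆ F}, F.1) = ⋂₀ {F | M.IsFlat F ∧ X ∩ M.E ⊆ F} := by
    rw [sInter_eq_iInter]
    exact (iInter_subtype _ _).symm ▸ rfl
  rw [h, ← heq]
  exact this

/-! ### Contraction-style independence (`qIndep`) -/

/-- `I` is independent in the contraction of `M` by `D`. -/
def qIndep (M : Matroid α) (D I : Set α) : Prop :=
  ∃ J, M.IsBasis J D ∧ M.Indep (I ∪ J)

variable {D J' I' Jx : Set α}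

lemma disjoint_insert_left' {a : α} {s t : Set α} (ha : a ∉ t) (h : Disjoint s t) :
    Disjoint (insert a s) t := by
  rw [Set.disjoint_left] at *
  rintro b (rfl | hb)
  · exact ha
  · exact h hb

/-- Basis exchange for contraction independence. -/
lemma qIndep.indep_union (hJ : M.IsBasis J D) (hJ' : M.IsBasis J' D) (hdj : Disjoint I D)
    (h : M.Indep (I ∪ J)) : M.Indep (I ∪ J') := by
  by_contra hdep
  have hIE : I ⊆ M.E := (subset_union_left).trans h.subset_ground
  obtain ⟨W, hW, hJ'W⟩ := hJ'.indep.subset_isBasis_of_subset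
    (subset_union_right (s := I)) (union_subset hIE hJ'.indep.subset_ground)
  by_cases hIW : I ⊆ W
  · exact hdep (hW.indep.subset (hW.subset.antisymm (union_subset hIW hJ'W) ▸ Subset.rfl))
  obtain ⟨x, hxI, hxW⟩ := not_subset.1 hIW
  have hxJ : x ∉ J := fun hc => (hdj.ne_of_mem hxI (hJ.subset hc)) rfl
  have h1 : x ∈ M.closure W := hW.subset_closure (Or.inl hxI)
  have h2 : W ⊆ (I \ {x}) ∪ J' := by
    intro w hw
    rcases hW.subset hw with hwI | hwJ'
    · exact Or.inl ⟨hwI, fun hc => hxW (hc ▸ hw)⟩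
    · exact Or.inr hwJ'
  have h3 : x ∈ M.closure ((I \ {x}) ∪ J') :=
    M.closure_subset_closure_of_subset_closure
      (fun w hw => M.subset_closure _ (union_subset (diff_subset.trans hIE)
        hJ'.indep.subset_ground) (h2 hw)) h1
  have h4 : M.closure ((I \ {x}) ∪ J') ⊆ M.closure ((I \ {x}) ∪ J) := by
    have hJ'cl : J' ⊆ M.closure J := by
      rw [hJ.closure_eq_closure]
      exact (hJ'.subset).trans (M.subset_closure D hJ.subset_ground)
    have : (I \ {x}) ∪ J' ⊆ M.closure ((I \ {x}) ∪ J) := by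
      refine union_subset ?_ (hJ'cl.trans (M.closure_subset_closure subset_union_right))
      intro w hw
      exact M.subset_closure _ (union_subset (diff_subset.trans hIE)
        hJ.indep.subset_ground) (Or.inl hw)
    exact M.closure_subset_closure_of_subset_closure this
  have h5 : (I \ {x}) ∪ J = (I ∪ J) \ {x} := by
    rw [union_diff_distrib, diff_singleton_eq_self hxJ]
  exact h.notMem_closure_diff_of_mem (Or.inl hxI) (h5 ▸ h4 h3)

lemma qIndep.subset (h : qIndep M D I) (hI' : I' ⊆ I) : qIndep M D I' := by
  obtain ⟨J, hJ, hind⟩ := h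
  exact ⟨J, hJ, hind.subset (union_subset_union_left _ hI')⟩

/-- Membership in the closure `cl (I ∪ D)` in terms of contraction independence. -/
lemma q_insert_iff (hI : qIndep M D I) (hdj : Disjoint (insert x I) D) (hxI : x ∉ I)
    (hxE : x ∈ M.E) : x ∈ M.closure (I ∪ D) ↔ ¬ qIndep M D (insert x I) := by
  obtain ⟨J, hJ, hind⟩ := hI
  have hdjI : Disjoint I D := hdj.mono_left (subset_insert _ _)
  have hclJ : M.closure (I ∪ D) = M.closure (I ∪ J) := by
    rw [eq_comm, ← closure_union_closure_right_eq, hJ.closure_eq_closure,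
      closure_union_closure_right_eq]
  have hxIJ : x ∉ I ∪ J := by
    rintro (h | h)
    · exact hxI h
    · exact (hdj.ne_of_mem (mem_insert _ _) (hJ.subset h)) rfl
  constructor
  · rintro hx ⟨J', hJ', hind'⟩
    have hind'' : M.Indep (insert x I ∪ J) :=
      qIndep.indep_union hJ' hJ hdj hind'
    rw [insert_union] at hind''
    have : M.Dep (insert x (I ∪ J)) := by
      rw [hind.insert_dep_iff]
      exact ⟨hclJ ▸ hx, hxIJ⟩
    exact this.not_indep hind''
  · intro hq
    have : ¬ M.Indep (insert x I ∪ J) := fun hc => hq ⟨J, hJ, hc⟩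
    rw [insert_union] at this
    rw [hind.insert_indep_iff_of_notMem hxIJ] at this
    simp only [mem_diff, hxE, true_and, not_not] at this
    exact hclJ ▸ this

/-- Existence of a relative basis with the maximality property. -/
lemma exists_qbasis (hD : D ⊆ M.E) (hY : Y ⊆ M.E) (hdj : Disjoint Y D) :
    ∃ Jx, Jx ⊆ Y ∧ qIndep M D Jx ∧ ∀ y ∈ Y \ Jx, ¬ qIndep M D (insert y Jx) := by
  obtain ⟨JD, hJD⟩ := M.exists_isBasis D hD
  obtain ⟨Js, hJs, hJDs⟩ := hJD.indep.subset_isBasis_of_subset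
    (hJD.subset.trans (subset_union_right (s := Y))) (union_subset hY hD)
  have hinter : Js ∩ D = JD := by
    refine subset_antisymm ?_ (subset_inter hJDs hJD.subset)
    rintro y ⟨hyJs, hyD⟩
    by_contra hyJD
    have h1 : y ∈ M.closure JD := by
      rw [hJD.closure_eq_closure]
      exact M.subset_closure D hD hyD
    have h2 : JD ⊆ Js \ {y} := fun w hw => ⟨hJDs hw, fun hc => hyJD (hc ▸ hw)⟩
    exact hJs.indep.notMem_closure_diff_of_mem hyJs
      (M.closure_subset_closure h2 h1)
  refine ⟨Js \ D, fun w hw => (hJs.subset hw.1).resolve_right hw.2, ⟨JD, hJD, ?_⟩, ?_⟩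
  · have heq : Js \ D ∪ JD = Js := by rw [← hinter, diff_union_inter]
    rw [heq]
    exact hJs.indep
  · rintro y ⟨hyY, hyJx⟩ ⟨J₀, hJ₀, hind₀⟩
    have hyD : y ∉ D := fun hc => (hdj.ne_of_mem hyY hc) rfl
    have hyJs : y ∉ Js := by
      intro hc
      exact hyJx ⟨hc, hyD⟩
    have hdj' : Disjoint (insert y (Js \ D)) D :=
      disjoint_insert_left' hyD disjoint_sdiff_left
    have hind' : M.Indep (insert y (Js \ D) ∪ JD) :=
      qIndep.indep_union hJ₀ hJD hdj' hind₀
    have heq : insert y (Js \ D) ∪ JD = insert y Js := by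
      rw [insert_union, ← hinter, diff_union_inter]
    rw [heq] at hind'
    have hycl : y ∈ M.closure Js := by
      rw [hJs.closure_eq_closure]
      exact M.subset_closure _ (union_subset hY hD) (Or.inl hyY)
    have : M.Dep (insert y Js) := by
      rw [hJs.indep.insert_dep_iff]
      exact ⟨hycl, hyJs⟩
    exact this.not_indep hind'

/-- Closure membership depends only on the contraction independence data. -/
lemma qchar (hD : D ⊆ M.E) (hY : Y ⊆ M.E) (hdjY : Disjoint Y D)
    (hJx : Jx ⊆ Y) (hq : qIndep M D Jx)
    (hmax : ∀ y ∈ Y \ Jx, ¬ qIndep M D (insert y Jx))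
    (hxE : x ∈ M.E) (hxY : x ∉ Y) (hxD : x ∉ D) :
    (x ∈ M.closure (Y ∪ D) ↔ ¬ qIndep M D (insert x Jx)) := by
  have hdjJx : Disjoint Jx D := hdjY.mono_left hJx
  have hclYD : M.closure (Y ∪ D) = M.closure (Jx ∪ D) := by
    refine subset_antisymm ?_ (M.closure_subset_closure (union_subset_union_left _ hJx))
    refine M.closure_subset_closure_of_subset_closure ?_
    refine union_subset ?_ (fun w hw => M.subset_closure _
      (union_subset (hJx.trans hY) hD) (Or.inr hw))
    intro y hy
    by_cases hyJx : y ∈ Jx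
    · exact M.subset_closure _ (union_subset (hJx.trans hY) hD) (Or.inl hyJx)
    · have hyD : y ∉ D := fun hc => (hdjY.ne_of_mem hy hc) rfl
      have hdj' : Disjoint (insert y Jx) D := disjoint_insert_left' hyD hdjJx
      exact (q_insert_iff hq hdj' hyJx (hY hy)).2 (hmax y ⟨hy, hyJx⟩)
  rw [hclYD]
  have hxJx : x ∉ Jx := fun hc => hxY (hJx hc)
  have hdj' : Disjoint (insert x Jx) D := disjoint_insert_left' hxD hdjJx
  exact q_insert_iff hq hdj' hxJx hxE

/-- Fundamental circuits for contraction independence. -/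
lemma exists_qcircuit (hD : D ⊆ M.E) (hX : X ⊆ M.E) (hdjX : Disjoint X D)
    (hx : x ∈ M.closure (X ∪ D)) (hxX : x ∉ X) (hxD : x ∉ D) :
    ∃ K, K ⊆ insert x X ∧ x ∈ K ∧ Disjoint K D ∧ ¬ qIndep M D K ∧
      ∀ z ∈ K, qIndep M D (K \ {z}) := by
  have hxE : x ∈ M.E := M.closure_subset_ground _ hx
  obtain ⟨JD, hJD⟩ := M.exists_isBasis D hD
  obtain ⟨Js, hJs, hJDs⟩ := hJD.indep.subset_isBasis_of_subset
    (hJD.subset.trans (subset_union_right (s := X))) (union_subset hX hD)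
  have hinter : Js ∩ D = JD := by
    refine subset_antisymm ?_ (subset_inter hJDs hJD.subset)
    rintro y ⟨hyJs, hyD⟩
    by_contra hyJD
    have h1 : y ∈ M.closure JD := by
      rw [hJD.closure_eq_closure]; exact M.subset_closure D hD hyD
    have h2 : JD ⊆ Js \ {y} := fun w hw => ⟨hJDs hw, fun hc => hyJD (hc ▸ hw)⟩
    exact hJs.indep.notMem_closure_diff_of_mem hyJs (M.closure_subset_closure h2 h1)
  have hxJs : x ∉ Js := by
    intro hc
    rcases hJs.subset hc with h | h
    · exact hxX h
    · exact hxD h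
  have hxcl : x ∈ M.closure Js := by rw [hJs.closure_eq_closure]; exact hx
  obtain ⟨hKM, -⟩ := exists_mcircuit_of_indep hJs.indep hxcl hxJs
  set S : Set α := {y ∈ Js | x ∉ M.closure (Js \ {y})} with hSdef
  have hSJs : S ⊆ Js := sep_subset _ _
  have hKeq : insert x S \ D = insert x (S \ D) := by
    rw [insert_diff_of_notMem _ hxD]
  refine ⟨insert x (S \ D), ?_, mem_insert _ _, ?_, ?_, ?_⟩
  · refine insert_subset_insert ?_
    intro w hw
    rcases hJs.subset (hSJs hw.1) with h | h
    · exact h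
    · exact absurd h hw.2
  · exact disjoint_insert_left' hxD disjoint_sdiff_left
  · rintro ⟨J₀, hJ₀, hind₀⟩
    have hdj' : Disjoint (insert x (S \ D)) D := disjoint_insert_left' hxD disjoint_sdiff_left
    have hind' : M.Indep (insert x (S \ D) ∪ JD) :=
      qIndep.indep_union hJ₀ hJD hdj' hind₀
    have hsub : insert x S ⊆ insert x (S \ D) ∪ JD := by
      intro w hw
      rcases hw with rfl | hwS
      · exact Or.inl (mem_insert _ _)
      · by_cases hwD : w ∈ D
        · exact Or.inr (hinter ▸ ⟨hSJs hwS, hwD⟩)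
        · exact Or.inl (Or.inr ⟨hwS, hwD⟩)
    exact hKM.1.not_indep (hind'.subset hsub)
  · intro z hz
    rcases hz with rfl | hzS
    · refine ⟨JD, hJD, ?_⟩
      have h1 : insert z (S \ D) \ {z} = S \ D :=
        insert_diff_self_of_notMem (fun hc => hxJs (hSJs hc.1))
      rw [h1]
      refine hJs.indep.subset ?_
      exact union_subset ((diff_subset).trans hSJs) hJDs
    · have hzx : z ≠ x := fun hc => hxJs (hSJs (hc ▸ hzS).1)
      refine ⟨JD, hJD, ?_⟩
      have h1 : insert x (S \ D) \ {z} = insert x ((S \ D) \ {z}) := by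
        rw [insert_diff_of_notMem _ (by simp [hzx.symm])]
      rw [h1]
      have h2 : insert x ((S \ D) \ {z}) ∪ JD ⊆ insert x (Js \ {z}) := by
        rw [insert_union]
        refine insert_subset_insert ?_
        refine union_subset ?_ ?_
        · exact fun w hw => ⟨hSJs hw.1.1, hw.2⟩
        · intro w hw
          refine ⟨hJDs hw, ?_⟩
          intro hc
          rw [mem_singleton_iff] at hc
          subst hc
          exact hzS.2 (hJD.subset hw)
      have hJsz : M.Indep (Js \ {z}) := hJs.indep.subset diff_subset
      have hxne : x ∉ Js \ {z} := fun hc => hxJs hc.1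
      have hxncl : x ∉ M.closure (Js \ {z}) := hzS.1.2
      have hins : M.Indep (insert x (Js \ {z})) := by
        rw [hJsz.insert_indep_iff_of_notMem hxne]
        exact ⟨hxE, hxncl⟩
      exact hins.subset h2

/-! ### Flag-level structure -/

variable {k : ℕ} {Fl : Fin (k + 2) → Set α}

/-- The flag reindexed over `ℕ`, constant at `M.E` beyond `k+1`. -/
def Flnn (k : ℕ) (Fl : Fin (k + 2) → Set α) (n : ℕ) : Set α :=
  Fl ⟨min n (k + 1), lt_of_le_of_lt (min_le_right _ _) (Nat.lt_succ_self _)⟩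

lemma flnn_eq (j : Fin (k + 2)) : Flnn k Fl j.val = Fl j := by
  have hj : (⟨min j.val (k + 1), lt_of_le_of_lt (min_le_right _ _) (Nat.lt_succ_self _)⟩ :
      Fin (k+2)) = j := by
    refine Fin.ext ?_
    show min (j.val) (k+1) = j.val
    have := j.isLt
    omega
  rw [Flnn, hj]

lemma flnn_mono (hFl : IsFlag M k Fl) {n m : ℕ} (h : n ≤ m) : Flnn k Fl n ⊆ Flnn k Fl m := by
  unfold Flnn
  refine hFl.mono.monotone ?_
  rw [Fin.mk_le_mk]
  omega

lemma flnn_zero (hFl : IsFlag M k Fl) : Flnn k Fl 0 = ∅ := by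
  have h0 : (⟨min 0 (k+1), lt_of_le_of_lt (min_le_right _ _) (Nat.lt_succ_self _)⟩ : Fin (k+2))
      = 0 := Fin.ext (by simp only [Fin.val_mk, Fin.val_zero]; omega)
  rw [Flnn, h0, hFl.first]

lemma flnn_ge (hFl : IsFlag M k Fl) {n : ℕ} (h : k + 1 ≤ n) : Flnn k Fl n = M.E := by
  have h0 : (⟨min n (k+1), lt_of_le_of_lt (min_le_right _ _) (Nat.lt_succ_self _)⟩ : Fin (k+2))
      = Fin.last (k+1) := Fin.ext (by simp only [Fin.val_mk, Fin.val_last]; omega)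
  rw [Flnn, h0, hFl.last]

lemma mem_forestLabels_iff :
    C ∈ forestLabels M k Fl ↔ ∃ n, IsCompOf M C (Flnn k Fl n) := by
  constructor
  · rintro ⟨i, hi⟩
    exact ⟨i.val, (flnn_eq i).symm ▸ hi⟩
  · rintro ⟨n, hn⟩
    exact ⟨_, hn⟩

lemma loopless_of_flag (hFl : IsFlag M k Fl) (hsp : ∀ i, SpannedBy M (Fl i) B) :
    M.closure ∅ = ∅ := by
  obtain ⟨I, hIB, hIcl⟩ := hsp 0
  rw [hFl.first] at hIcl
  have h1 : M.closure ∅ ⊆ M.closure I := M.closure_subset_closure (empty_subset I)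
  rw [hIcl] at h1
  exact subset_antisymm h1 (empty_subset _)

lemma span_flnn (hFl : IsFlag M k Fl) (hsp : ∀ i, SpannedBy M (Fl i) B) (hBE : B ⊆ M.E)
    (n : ℕ) : M.closure (B ∩ Flnn k Fl n) = Flnn k Fl n := by
  obtain ⟨I, hIB, hIcl0⟩ :=
    hsp ⟨min n (k+1), lt_of_le_of_lt (min_le_right _ _) (Nat.lt_succ_self _)⟩
  have hIcl : M.closure I = Flnn k Fl n := hIcl0
  have hIFl : I ⊆ Flnn k Fl n := by
    rw [← hIcl]
    exact M.subset_closure I (hIB.trans hBE)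
  refine subset_antisymm ?_ ?_
  · refine (M.closure_subset_closure (inter_subset_right.trans hIcl.symm.subset)).trans ?_
    rw [closure_closure, hIcl]
  · have hsub : I ⊆ B ∩ Flnn k Fl n := subset_inter hIB hIFl
    calc Flnn k Fl n = M.closure I := hIcl.symm
    _ ⊆ M.closure (B ∩ Flnn k Fl n) := M.closure_subset_closure hsub

lemma flnn_subset_ground (hFl : IsFlag M k Fl) (n : ℕ) : Flnn k Fl n ⊆ M.E := by
  rw [← flnn_ge hFl (le_max_right n (k+1))]
  exact flnn_mono hFl (le_max_left _ _)

lemma clos_flnn (hFl : IsFlag M k Fl) (hsp : ∀ i, SpannedBy M (Fl i) B) (hBE : B ⊆ M.E)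
    (n : ℕ) : M.closure (Flnn k Fl n) = Flnn k Fl n := by
  have h := span_flnn hFl hsp hBE (B := B) n
  conv_lhs => rw [← h, closure_closure]
  exact h


/-- Union of all labels strictly below `C`. -/
def DUnion (M : Matroid α) (k : ℕ) (Fl : Fin (k + 2) → Set α) (C : Set α) : Set α :=
  ⋃₀ {C' | C' ∈ forestLabels M k Fl ∧ C' ⊂ C}

lemma dunion_subset : DUnion M k Fl C ⊆ C := by
  rintro x ⟨C', ⟨-, hC'⟩, hx⟩
  exact hC'.1 hx

section FlagLemmas

variable (hFl : IsFlag M k Fl) (hsp : ∀ i, SpannedBy M (Fl i) B) (hBi : M.Indep B)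

include hFl

lemma lab_subset_ground (h : C ∈ forestLabels M k Fl) : C ⊆ M.E := by
  obtain ⟨n, hn⟩ := mem_forestLabels_iff.1 h
  exact hn.subset.trans (flnn_subset_ground hFl n)

lemma lab_nonempty (h : C ∈ forestLabels M k Fl) : C.Nonempty := by
  obtain ⟨n, hn⟩ := mem_forestLabels_iff.1 h
  exact hn.nonempty

include hsp hBi

lemma lab_closure (h : C ∈ forestLabels M k Fl) : M.closure C = C := by
  obtain ⟨n, hn⟩ := mem_forestLabels_iff.1 h
  exact hn.closure_eq (flnn_subset_ground hFl n)
    (clos_flnn hFl hsp hBi.subset_ground n)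
    (loopless_of_flag hFl hsp)

lemma lab_span (h : C ∈ forestLabels M k Fl) : M.closure (B ∩ C) = C := by
  obtain ⟨n, hn⟩ := mem_forestLabels_iff.1 h
  refine subset_antisymm ?_ (hn.subset_closure_inter (flnn_subset_ground hFl n)
    (span_flnn hFl hsp hBi.subset_ground n))
  have h1 : M.closure (B ∩ C) ⊆ M.closure C := M.closure_subset_closure inter_subset_right
  rw [lab_closure hFl hsp hBi h] at h1
  exact h1

omit hsp hBi

lemma lab_nested (h : C ∈ forestLabels M k Fl) (h' : C' ∈ forestLabels M k Fl)
    (hne : (C ∩ C').Nonempty) : C ⊆ C' ∨ C' ⊆ C := by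
  obtain ⟨n, hn⟩ := mem_forestLabels_iff.1 h
  obtain ⟨m, hm⟩ := mem_forestLabels_iff.1 h'
  obtain ⟨z, hz⟩ := hne
  rcases le_total n m with hnm | hnm
  · exact Or.inl (hn.subset_of_le (flnn_subset_ground hFl m) (flnn_mono hFl hnm) hm hz)
  · exact Or.inr (hm.subset_of_le (flnn_subset_ground hFl n) (flnn_mono hFl hnm) hn
      ⟨hz.2, hz.1⟩)

end FlagLemmas

/-- The birth level of a label. -/
noncomputable def birthN (M : Matroid α) (k : ℕ) (Fl : Fin (k + 2) → Set α) (C : Set α) : ℕ :=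
  sInf {n | IsCompOf M C (Flnn k Fl n)}

section Birth

variable (hFl : IsFlag M k Fl)

lemma birth_comp (h : C ∈ forestLabels M k Fl) :
    IsCompOf M C (Flnn k Fl (birthN M k Fl C)) :=
  Nat.sInf_mem (mem_forestLabels_iff.1 h)

lemma birth_min {n : ℕ} (hn : n < birthN M k Fl C) : ¬ IsCompOf M C (Flnn k Fl n) :=
  Nat.notMem_of_lt_sInf hn

include hFl

lemma birth_pos (h : C ∈ forestLabels M k Fl) : 0 < birthN M k Fl C := by
  rcases Nat.eq_zero_or_pos (birthN M k Fl C) with h0 | h1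
  · exfalso
    have := birth_comp h
    rw [h0, flnn_zero hFl] at this
    obtain ⟨z, hz⟩ := this.nonempty
    exact absurd (this.subset hz) (notMem_empty z)
  · exact h1

lemma birth_le (h : C ∈ forestLabels M k Fl) : birthN M k Fl C ≤ k + 1 := by
  obtain ⟨i, hi⟩ := h
  have : IsCompOf M C (Flnn k Fl i.val) := (flnn_eq i).symm ▸ hi
  have h2 : birthN M k Fl C ≤ i.val := Nat.sInf_le this
  have h3 := i.isLt
  omega

/-- `DUnion C = C ∩ Flnn (birthN C - 1)`. -/
lemma dunion_eq (hsp : ∀ i, SpannedBy M (Fl i) B) (hBi : M.Indep B)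
    (h : C ∈ forestLabels M k Fl) :
    DUnion M k Fl C = C ∩ Flnn k Fl (birthN M k Fl C - 1) := by
  set b := birthN M k Fl C with hb
  have hcomp : IsCompOf M C (Flnn k Fl b) := birth_comp h
  refine subset_antisymm ?_ ?_
  · rintro x ⟨C', ⟨hC'lab, hC'ss⟩, hx⟩
    obtain ⟨m, hm⟩ := mem_forestLabels_iff.1 hC'lab
    have hmb : m < b := by
      by_contra hge
      push_neg at hge
      obtain ⟨z, hz⟩ := hm.nonempty
      have : C ⊆ C' := hcomp.subset_of_le (flnn_subset_ground hFl m)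
        (flnn_mono hFl hge) hm ⟨hC'ss.subset hz, hz⟩
      exact hC'ss.not_subset this
    refine ⟨hC'ss.subset hx, ?_⟩
    exact (flnn_mono hFl (by omega)) (hm.subset hx)
  · rintro x ⟨hxC, hxF⟩
    have hb1 : 0 < b := birth_pos hFl h
    have hWcomp : IsCompOf M (compOf M x (Flnn k Fl (b - 1))) (Flnn k Fl (b - 1)) :=
      isCompOf_compOf hxF
    have hxW : x ∈ compOf M x (Flnn k Fl (b - 1)) := mem_compOf_self hxF
    have hWC : compOf M x (Flnn k Fl (b - 1)) ⊆ C := hWcomp.subset_of_le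
      (flnn_subset_ground hFl b) (flnn_mono hFl (by omega)) hcomp ⟨hxW, hxC⟩
    have hWne : compOf M x (Flnn k Fl (b - 1)) ≠ C := by
      intro heq
      exact birth_min (by omega) (heq ▸ hWcomp)
    exact ⟨_, ⟨mem_forestLabels_iff.2 ⟨b - 1, hWcomp⟩,
      ssubset_of_subset_of_ne hWC hWne⟩, hxW⟩

lemma dunion_closure (hsp : ∀ i, SpannedBy M (Fl i) B) (hBi : M.Indep B)
    (h : C ∈ forestLabels M k Fl) :
    M.closure (DUnion M k Fl C) = DUnion M k Fl C := by
  rw [dunion_eq hFl hsp hBi h]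
  refine subset_antisymm ?_ (M.subset_closure _ ((inter_subset_left).trans
    (lab_subset_ground hFl h)))
  intro z hz
  constructor
  · have h1 : z ∈ M.closure C := M.closure_subset_closure inter_subset_left hz
    rw [lab_closure hFl hsp hBi h] at h1
    exact h1
  · have h1 : z ∈ M.closure (Flnn k Fl (birthN M k Fl C - 1)) :=
      M.closure_subset_closure inter_subset_right hz
    rw [clos_flnn hFl hsp hBi.subset_ground] at h1
    exact h1

lemma dunion_span (hsp : ∀ i, SpannedBy M (Fl i) B) (hBi : M.Indep B)
    (h : C ∈ forestLabels M k Fl) :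
    M.closure (B ∩ DUnion M k Fl C) = DUnion M k Fl C := by
  rw [dunion_eq hFl hsp hBi h]
  have h1 : B ∩ (C ∩ Flnn k Fl (birthN M k Fl C - 1)) =
      (B ∩ C) ∩ (B ∩ Flnn k Fl (birthN M k Fl C - 1)) := by
    ext w; constructor
    · rintro ⟨hw1, hw2, hw3⟩; exact ⟨⟨hw1, hw2⟩, hw1, hw3⟩
    · rintro ⟨⟨hw1, hw2⟩, -, hw3⟩; exact ⟨hw1, hw2, hw3⟩
  rw [h1, ← closure_inter_closure_of_subset_indep hBi inter_subset_left inter_subset_left,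
    lab_span hFl hsp hBi h, span_flnn hFl hsp hBi.subset_ground]

lemma dunion_ssubset (hsp : ∀ i, SpannedBy M (Fl i) B) (hBi : M.Indep B)
    (h : C ∈ forestLabels M k Fl) : DUnion M k Fl C ⊂ C := by
  refine ssubset_of_subset_of_ne dunion_subset ?_
  intro heq
  have hd := dunion_eq hFl hsp hBi h
  rw [heq] at hd
  have hsub : C ⊆ Flnn k Fl (birthN M k Fl C - 1) := by
    intro z hz
    exact (hd.subset hz).2
  have hb1 : 0 < birthN M k Fl C := birth_pos hFl h
  have := (birth_comp h).of_subset (flnn_subset_ground hFl (birthN M k Fl C)) (flnn_mono hFl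
    (by omega)) hsub
  exact birth_min (by omega) this

end Birth

/-- Every element of the ground set has a minimal label, and lies in its part. -/
lemma exists_min_label (hFl : IsFlag M k Fl) (hx : x ∈ M.E) :
    ∃ C ∈ forestLabels M k Fl, x ∈ C \ DUnion M k Fl C ∧
      ∀ C' ∈ forestLabels M k Fl, x ∈ C' → C ⊆ C' := by
  have hxlast : x ∈ Flnn k Fl (k + 1) := by rw [flnn_ge hFl (le_refl _)]; exact hx
  have hex : ∃ n, x ∈ Flnn k Fl n := ⟨k + 1, hxlast⟩
  set n₀ := sInf {n | x ∈ Flnn k Fl n} with hn₀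
  have hxn₀ : x ∈ Flnn k Fl n₀ := Nat.sInf_mem hex
  set C := compOf M x (Flnn k Fl n₀) with hC
  have hCcomp : IsCompOf M C (Flnn k Fl n₀) := isCompOf_compOf hxn₀
  have hClab : C ∈ forestLabels M k Fl := mem_forestLabels_iff.2 ⟨n₀, hCcomp⟩
  have hmin : ∀ C' ∈ forestLabels M k Fl, x ∈ C' → C ⊆ C' := by
    intro C' hC'lab hxC'
    obtain ⟨m, hm⟩ := mem_forestLabels_iff.1 hC'lab
    have hn₀m : n₀ ≤ m := Nat.sInf_le (hm.subset hxC')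
    exact hCcomp.subset_of_le (flnn_subset_ground hFl m) (flnn_mono hFl hn₀m) hm
      ⟨mem_compOf_self hxn₀, hxC'⟩
  refine ⟨C, hClab, ⟨mem_compOf_self hxn₀, ?_⟩, hmin⟩
  rintro ⟨C', ⟨hC'lab, hC'ss⟩, hxC'⟩
  exact hC'ss.not_subset (hmin C' hC'lab hxC')

/-- Parts of distinct labels are disjoint. -/
lemma parts_eq_of_mem (hFl : IsFlag M k Fl) (h : C ∈ forestLabels M k Fl)
    (h' : C' ∈ forestLabels M k Fl) (hx : x ∈ C \ DUnion M k Fl C)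
    (hx' : x ∈ C' \ DUnion M k Fl C') : C = C' := by
  rcases lab_nested hFl h h' ⟨x, hx.1, hx'.1⟩ with hs | hs
  · rcases eq_or_ne C C' with heq | hne
    · exact heq
    · exact absurd ⟨C, ⟨h, ssubset_of_subset_of_ne hs hne⟩, hx.1⟩ hx'.2
  · rcases eq_or_ne C C' with heq | hne
    · exact heq
    · exact absurd ⟨C', ⟨h', ssubset_of_subset_of_ne hs (Ne.symm hne)⟩, hx'.1⟩ hx.2

lemma IsCompOf.eq_of_mem (h : IsCompOf M C F) (h' : IsCompOf M C' F) (hz : z ∈ C ∩ C') :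
    C = C' := by
  rw [h.eq_compOf hz.1, h'.eq_compOf hz.2]

/-- Decomposition of minor independence over components. -/
lemma minorIndep_decompose (hFE : F ⊆ M.E) (hF'sub : F' ⊆ F) (hX : X ⊆ F \ F') :
    minorIndep M F F' X ↔ ∀ Cc, IsCompOf M Cc F → minorIndep M Cc (Cc ∩ F') (X ∩ Cc) := by
  constructor
  · rintro ⟨hXsub, J, hJ, hind⟩ Cc hCc
    have hJF' : J ⊆ F' := hJ.subset
    refine ⟨fun w hw => ⟨hw.2, fun hc => (hX hw.1).2 hc.2⟩, J ∩ Cc, ?_, ?_⟩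
    · refine (hJ.indep.subset inter_subset_left).isBasis_of_subset_of_subset_closure
        (fun w hw => ⟨hw.2, hJF' hw.1⟩) ?_
      rintro x' ⟨hx'C, hx'F'⟩
      by_cases hx'J : x' ∈ J
      · exact M.subset_closure _ ((inter_subset_left).trans hJ.indep.subset_ground)
          ⟨hx'J, hx'C⟩
      · have hx'cl : x' ∈ M.closure J := hJ.subset_closure hx'F'
        obtain ⟨hK, hx'S⟩ := exists_mcircuit_of_indep hJ.indep hx'cl hx'J
        set S : Set α := {y ∈ J | x' ∉ M.closure (J \ {y})}
        have hSJ : S ⊆ J := sep_subset _ _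
        have hKF : insert x' S ⊆ F := insert_subset ((hF'sub) hx'F')
          (fun u hu => hF'sub (hJF' (hSJ hu)))
        have hKr : MCircuit (M ↾ F) (insert x' S) := mcircuit_restrict_intro hK hKF
        have hSC : S ⊆ Cc := by
          intro u hu
          have hconn : ConnTo (M ↾ F) x' u :=
            Relation.ReflTransGen.single ⟨_, hKr, mem_insert _ _, Or.inr hu⟩
          have : u ∈ compOf M x' F := ⟨hKF (Or.inr hu), hconn⟩
          rw [← hCc.eq_compOf hx'C] at this
          exact this
        have hsub : S ⊆ J ∩ Cc := fun u hu => ⟨hSJ hu, hSC hu⟩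
        exact M.closure_subset_closure hsub hx'S
    · exact hind.subset (union_subset_union inter_subset_left inter_subset_left)
  · intro h
    classical
    have htJ : ∀ (Cc : {D // IsCompOf M D F}),
        M.IsBasis ((h Cc.1 Cc.2).2.choose) (Cc.1 ∩ F') ∧
          M.Indep ((X ∩ Cc.1) ∪ (h Cc.1 Cc.2).2.choose) := fun Cc => (h Cc.1 Cc.2).2.choose_spec
    set J : Set α := ⋃ Cc : {D // IsCompOf M D F}, (h Cc.1 Cc.2).2.choose with hJdef
    have hJint : ∀ (Cc : {D // IsCompOf M D F}), J ∩ Cc.1 = (h Cc.1 Cc.2).2.choose := by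
      intro Cc
      refine subset_antisymm ?_ (subset_inter ?_ ?_)
      · rintro a ⟨haJ, haC⟩
        simp only [hJdef, mem_iUnion] at haJ
        obtain ⟨Cc', ha'⟩ := haJ
        have haC' : a ∈ Cc'.1 := ((htJ Cc').1.subset ha').1
        have hceq : Cc'.1 = Cc.1 := Cc'.2.eq_of_mem Cc.2 ⟨haC', haC⟩
        have : Cc' = Cc := Subtype.ext hceq
        rwa [this] at ha'
      · intro a ha
        simp only [hJdef, mem_iUnion]
        exact ⟨Cc, ha⟩
      · exact (htJ Cc).1.subset.trans inter_subset_left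
    have hJF' : J ⊆ F' := by
      rintro a haJ
      simp only [hJdef, mem_iUnion] at haJ
      obtain ⟨Cc', ha'⟩ := haJ
      exact ((htJ Cc').1.subset ha').2
    have hJindep : M.Indep J := by
      refine indep_of_forall_inter_comp_indep hFE (hJF'.trans hF'sub) ?_
      intro Cc hc
      rw [hJint ⟨Cc, hc⟩]
      exact (htJ ⟨Cc, hc⟩).1.indep
    have hJbasis : M.IsBasis J F' := by
      refine hJindep.isBasis_of_subset_of_subset_closure hJF' ?_
      intro z hz
      have hzF : z ∈ F := hF'sub hz
      have hzc : z ∈ compOf M z F := mem_compOf_self hzF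
      have hcz : IsCompOf M (compOf M z F) F := isCompOf_compOf hzF
      have : z ∈ M.closure ((h _ (⟨compOf M z F, hcz⟩ : {D // IsCompOf M D F}).2).2.choose) :=
        (htJ ⟨compOf M z F, hcz⟩).1.subset_closure ⟨hzc, hz⟩
      refine M.closure_subset_closure ?_ this
      rw [← hJint ⟨compOf M z F, hcz⟩]
      exact inter_subset_left
    refine ⟨hX, J, hJbasis, ?_⟩
    refine indep_of_forall_inter_comp_indep hFE ?_ ?_
    · exact union_subset (hX.trans diff_subset) (hJF'.trans hF'sub)
    · intro Cc hc
      rw [union_inter_distrib_right, hJint ⟨Cc, hc⟩]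
      exact (htJ ⟨Cc, hc⟩).2

/-- Interval property for components. -/
lemma dunion_eq_level (hFl : IsFlag M k Fl) (hsp : ∀ i, SpannedBy M (Fl i) B)
    (hBi : M.Indep B) {n : ℕ} (hcomp : IsCompOf M C (Flnn k Fl (n + 1)))
    (hnot : ¬ IsCompOf M C (Flnn k Fl n)) :
    DUnion M k Fl C = C ∩ Flnn k Fl n := by
  have hlab : C ∈ forestLabels M k Fl := mem_forestLabels_iff.2 ⟨n + 1, hcomp⟩
  have hble : birthN M k Fl C ≤ n + 1 := Nat.sInf_le hcomp
  have hbgt : n < birthN M k Fl C := by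
    by_contra hc
    push_neg at hc
    have hb := birth_comp hlab
    have hsub : C ⊆ Flnn k Fl n := (hb.subset).trans (flnn_mono hFl hc)
    exact hnot (hcomp.of_subset (flnn_subset_ground hFl (n + 1))
      (flnn_mono hFl (Nat.le_succ n)) hsub)
  have hbeq : birthN M k Fl C = n + 1 := le_antisymm hble hbgt
  rw [dunion_eq hFl hsp hBi hlab, hbeq]
  simp

/-- The label formula for flag independence. -/
lemma flagIndep_iff_labels (hFl : IsFlag M k Fl) (hsp : ∀ i, SpannedBy M (Fl i) B)
    (hBi : M.Indep B) (I : Set α) :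
    flagIndep M k Fl I ↔ I ⊆ M.E ∧ ∀ C ∈ forestLabels M k Fl,
      minorIndep M C (DUnion M k Fl C) (I ∩ (C \ DUnion M k Fl C)) := by
  constructor
  · rintro ⟨hIE, hlev⟩
    refine ⟨hIE, ?_⟩
    intro C hC
    have hb1 : 0 < birthN M k Fl C := birth_pos hFl hC
    have hble : birthN M k Fl C ≤ k + 1 := birth_le hFl hC
    set n : ℕ := birthN M k Fl C - 1 with hn
    have hcomp : IsCompOf M C (Flnn k Fl (n + 1)) := by
      have : n + 1 = birthN M k Fl C := by omega
      rw [this]; exact birth_comp hC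
    have hnot : ¬ IsCompOf M C (Flnn k Fl n) := birth_min (by omega)
    have hDU : DUnion M k Fl C = C ∩ Flnn k Fl n :=
      dunion_eq_level hFl hsp hBi hcomp hnot
    set i : Fin (k + 1) := ⟨n, by omega⟩ with hi
    have hisucc : Fl i.succ = Flnn k Fl (n + 1) := by
      rw [← flnn_eq (Fl := Fl) i.succ]; rfl
    have hicast : Fl i.castSucc = Flnn k Fl n := by
      rw [← flnn_eq (Fl := Fl) i.castSucc]; rfl
    have hlev' := hlev i
    rw [hisucc, hicast] at hlev'
    have hdec := (minorIndep_decompose (flnn_subset_ground hFl (n+1))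
      (flnn_mono hFl (Nat.le_succ n))
      (inter_subset_right (s := I))).1 hlev' C hcomp
    have hXC : I ∩ (Flnn k Fl (n + 1) \ Flnn k Fl n) ∩ C = I ∩ (C \ DUnion M k Fl C) := by
      rw [hDU]
      ext w
      constructor
      · rintro ⟨⟨hwI, hw1, hw2⟩, hwC⟩
        exact ⟨hwI, hwC, fun hc => hw2 hc.2⟩
      · rintro ⟨hwI, hwC, hw2⟩
        exact ⟨⟨hwI, hcomp.subset hwC, fun hc => hw2 ⟨hwC, hc⟩⟩, hwC⟩
    rw [hXC, ← hDU] at hdec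
    exact hdec
  · rintro ⟨hIE, hlab⟩
    refine ⟨hIE, ?_⟩
    intro i
    have hisucc : Fl i.succ = Flnn k Fl (i.val + 1) := by
      rw [← flnn_eq (Fl := Fl) i.succ]; rfl
    have hicast : Fl i.castSucc = Flnn k Fl i.val := by
      rw [← flnn_eq (Fl := Fl) i.castSucc]; rfl
    rw [hisucc, hicast]
    set n : ℕ := i.val
    refine (minorIndep_decompose (flnn_subset_ground hFl (n+1))
      (flnn_mono hFl (Nat.le_succ n)) (inter_subset_right (s := I))).2 ?_
    intro Cc hCc
    by_cases hprev : IsCompOf M Cc (Flnn k Fl n)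
    · have hXC : I ∩ (Flnn k Fl (n + 1) \ Flnn k Fl n) ∩ Cc = ∅ := by
        ext w
        simp only [mem_inter_iff, mem_diff, mem_empty_iff_false, iff_false]
        rintro ⟨⟨-, -, hw2⟩, hwC⟩
        exact hw2 (hprev.subset hwC)
      have hCF' : Cc ∩ Flnn k Fl n = Cc := by
        rw [inter_eq_left]; exact hprev.subset
      rw [hXC, hCF']
      obtain ⟨JC, hJC⟩ := M.exists_isBasis Cc
        ((hCc.subset).trans (flnn_subset_ground hFl (n+1)))
      exact ⟨by simp, JC, hJC, by rw [empty_union]; exact hJC.indep⟩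
    · have hDU : DUnion M k Fl Cc = Cc ∩ Flnn k Fl n :=
        dunion_eq_level hFl hsp hBi hCc hprev
      have hXC : I ∩ (Flnn k Fl (n + 1) \ Flnn k Fl n) ∩ Cc =
          I ∩ (Cc \ DUnion M k Fl Cc) := by
        rw [hDU]
        ext w
        constructor
        · rintro ⟨⟨hwI, hw1, hw2⟩, hwC⟩
          exact ⟨hwI, hwC, fun hc => hw2 hc.2⟩
        · rintro ⟨hwI, hwC, hw2⟩
          exact ⟨⟨hwI, hCc.subset hwC, fun hc => hw2 ⟨hwC, hc⟩⟩, hwC⟩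
      rw [hXC, ← hDU]
      exact hlab Cc (mem_forestLabels_iff.2 ⟨n + 1, hCc⟩)

lemma minorIndep_empty {G : Set α} (hD : D ⊆ M.E) : minorIndep M G D ∅ := by
  obtain ⟨J, hJ⟩ := M.exists_isBasis D hD
  exact ⟨empty_subset _, J, hJ, by rw [empty_union]; exact hJ.indep⟩

/-- Flag independence of a subset of a part is piece independence. -/
lemma flagIndep_iff_piece (hFl : IsFlag M k Fl) (hsp : ∀ i, SpannedBy M (Fl i) B)
    (hBi : M.Indep B) (hC : C ∈ forestLabels M k Fl)
    (hI : I ⊆ C \ DUnion M k Fl C) :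
    flagIndep M k Fl I ↔ qIndep M (DUnion M k Fl C) I := by
  rw [flagIndep_iff_labels hFl hsp hBi]
  constructor
  · rintro ⟨-, hlab⟩
    have h := hlab C hC
    rw [inter_eq_left.2 hI] at h
    exact h.2
  · intro hq
    refine ⟨hI.trans (diff_subset.trans (lab_subset_ground hFl hC)), ?_⟩
    intro C' hC'
    rcases eq_or_ne C' C with rfl | hne
    · rw [inter_eq_left.2 hI]
      exact ⟨hI, hq⟩
    · have hemp : I ∩ (C' \ DUnion M k Fl C') = ∅ := by
        ext w
        simp only [mem_inter_iff, mem_empty_iff_false, iff_false, not_and]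
        intro hwI hw'
        exact hne (parts_eq_of_mem hFl hC' hC hw' (hI hwI))
      rw [hemp]
      exact minorIndep_empty (dunion_subset.trans (lab_subset_ground hFl hC'))

/-- A step in the circuit connectivity of a contraction piece. -/
def qStep (M : Matroid α) (D P : Set α) (a b : α) : Prop :=
  ∃ K, K ⊆ P ∧ ¬ qIndep M D K ∧ (∀ z ∈ K, qIndep M D (K \ {z})) ∧ a ∈ K ∧ b ∈ K

lemma qStep.symm {P : Set α} {a b : α} (h : qStep M D P a b) : qStep M D P b a := by
  obtain ⟨K, h1, h2, h3, h4, h5⟩ := h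
  exact ⟨K, h1, h2, h3, h5, h4⟩

lemma qStep.mem_left {P : Set α} {a b : α} (h : qStep M D P a b) : a ∈ P := by
  obtain ⟨K, h1, -, -, h4, -⟩ := h
  exact h1 h4

lemma qStep.mem_right {P : Set α} {a b : α} (h : qStep M D P a b) : b ∈ P := by
  obtain ⟨K, h1, -, -, -, h5⟩ := h
  exact h1 h5

/-- Circuit-type membership in closure for a `qStep` circuit. -/
lemma qcct_mem_closure (hK : ¬ qIndep M D K) (hmin : ∀ z ∈ K, qIndep M D (K \ {z}))
    (hz : z ∈ K) (hdj : Disjoint K D) (hzE : z ∈ M.E) :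
    z ∈ M.closure ((K \ {z}) ∪ D) := by
  have hq := hmin z hz
  have hdj' : Disjoint (insert z (K \ {z})) D := by
    rw [insert_diff_singleton, insert_eq_of_mem hz]
    exact hdj
  have hin : insert z (K \ {z}) = K := by rw [insert_diff_singleton, insert_eq_of_mem hz]
  refine (q_insert_iff hq hdj' (by simp) hzE).2 ?_
  rw [hin]
  exact hK

section Fact1

variable (hFl : IsFlag M k Fl) (hsp : ∀ i, SpannedBy M (Fl i) B) (hB : Circuitous M B)

include hFl hsp hB

/-- FACT 1 : the parts are connected via piece circuits. -/
lemma part_connected (hC : C ∈ forestLabels M k Fl)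
    (hx : x ∈ C \ DUnion M k Fl C) (hy : y ∈ C \ DUnion M k Fl C) :
    Relation.ReflTransGen (qStep M (DUnion M k Fl C) (C \ DUnion M k Fl C)) x y := by
  classical
  have hBi : M.Indep B := hB.1.indep
  set D := DUnion M k Fl C with hD
  set P := C \ DUnion M k Fl C with hP
  have hCE : C ⊆ M.E := lab_subset_ground hFl hC
  have hDE : D ⊆ M.E := dunion_subset.trans hCE
  have hDcl : M.closure D = D := dunion_closure hFl hsp hBi hC
  have hDsp : M.closure (B ∩ D) = D := dunion_span hFl hsp hBi hC
  have hCcl : M.closure C = C := lab_closure hFl hsp hBi hC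
  have hCsp : M.closure (B ∩ C) = C := lab_span hFl hsp hBi hC
  have hPE : P ⊆ M.E := diff_subset.trans hCE
  -- circuitous witness
  obtain ⟨n, hcomp⟩ := mem_forestLabels_iff.1 hC
  obtain ⟨e, heEB, K₀, hK₀B, hK₀, hK₀cl⟩ := hB.2 C
    (by rw [← hCcl]; exact flat_closure M C)
    (hcomp.mconnected (flnn_subset_ground hFl n))
    ⟨B ∩ C, inter_subset_left, hCsp⟩
  have hK₀C : K₀ ⊆ C := by rw [← hK₀cl]; exact M.subset_closure _ hK₀.subset_ground
  -- suppose not connected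
  by_contra hconn
  set S := {w ∈ P | Relation.ReflTransGen (qStep M D P) x w} with hS
  have hxS : x ∈ S := ⟨hx, Relation.ReflTransGen.refl⟩
  have hyS : y ∉ S := fun hc => hconn hc.2
  have hstepS : ∀ a b, qStep M D P a b → (a ∈ S ↔ b ∈ S) := by
    intro a b hab
    constructor
    · intro ha
      exact ⟨hab.mem_right, ha.2.tail hab⟩
    · intro hb
      exact ⟨hab.mem_left, hb.2.tail hab.symm⟩
  set T := if e ∈ S then P \ S else S with hT
  have hTP : T ⊆ P := by
    rw [hT]; split_ifs
    · exact diff_subset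
    · exact fun w hw => hw.1
  have heT : e ∉ T := by
    rw [hT]; split_ifs with he
    · exact fun hc => hc.2 he
    · exact fun hc => he hc
  have hTne : T.Nonempty := by
    rw [hT]; split_ifs with he
    · exact ⟨y, hy, hyS⟩
    · exact ⟨x, hxS⟩
  have hstepT : ∀ a b, qStep M D P a b → a ∈ T → b ∈ T := by
    intro a b hab ha
    rw [hT] at ha ⊢
    split_ifs at ha ⊢ with he
    · exact ⟨hab.mem_right, fun hc => ha.2 ((hstepS a b hab).2 hc)⟩
    · exact (hstepS a b hab).1 ha
  -- the splitting lemma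
  have hsplit : ∀ X, X ⊆ P → ∀ z ∈ T, z ∉ X → z ∈ M.closure (X ∪ D) →
      z ∈ M.closure ((X ∩ T) ∪ D) := by
    intro X hXP z hzT hzX hzcl
    have hzP : z ∈ P := hTP hzT
    have hzD : z ∉ D := hzP.2 ∘ fun hd => hd
    have hdjXD : Disjoint X D := by
      rw [Set.disjoint_left]
      exact fun w hw => (hXP hw).2 ∘ fun hd => hd
    obtain ⟨K, hKiX, hzK, hKD, hKq, hKmin⟩ :=
      exists_qcircuit hDE (hXP.trans hPE) hdjXD hzcl hzX hzD
    have hKP : K ⊆ P := hKiX.trans (insert_subset hzP hXP)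
    have hKT : K ⊆ T := by
      intro w hw
      exact hstepT z w ⟨K, hKP, hKq, hKmin, hzK, hw⟩ hzT
    have h1 : z ∈ M.closure ((K \ {z}) ∪ D) :=
      qcct_mem_closure hKq hKmin hzK hKD (hPE hzP)
    refine M.closure_subset_closure (union_subset_union_left D ?_) h1
    intro w hw
    rcases hKiX hw.1 with rfl | hwX
    · exact absurd rfl hw.2
    · exact ⟨hwX, hKT hw.1⟩
  -- spanning
  have hspan : P ⊆ M.closure ((K₀ ∩ P) ∪ D) := by
    intro c hc
    have h1 : c ∈ M.closure K₀ := by rw [hK₀cl]; exact hc.1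
    refine M.closure_subset_closure ?_ h1
    intro w hw
    by_cases hwD : w ∈ D
    · exact Or.inr hwD
    · exact Or.inl ⟨hw, hK₀C hw, hwD⟩
  -- find x* ∈ K₀ ∩ T
  have hxstar : ∃ x', x' ∈ K₀ ∩ T := by
    obtain ⟨t, ht⟩ := hTne
    by_cases htK : t ∈ K₀ ∩ P
    · exact ⟨t, htK.1, ht⟩
    · have htP : t ∈ P := hTP ht
      have htX : t ∉ K₀ ∩ P := htK
      have h1 := hsplit (K₀ ∩ P) inter_subset_right t ht htX (hspan htP)
      by_contra hc
      push_neg at hc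
      have hemp : K₀ ∩ P ∩ T = ∅ := by
        ext w
        simp only [mem_inter_iff, mem_empty_iff_false, iff_false, not_and]
        intro hw1 hw2
        exact hc w ⟨hw1.1, hw2⟩
      rw [hemp, empty_union, hDcl] at h1
      exact htP.2 h1
  obtain ⟨xs, hxsK₀, hxsT⟩ := hxstar
  have hxsB : xs ∈ B := by
    rcases hK₀B hxsK₀ with rfl | hb
    · exact absurd hxsT heT
    · exact hb
  have hxsP : xs ∈ P := hTP hxsT
  -- final contradiction
  have h1 : xs ∈ M.closure (K₀ \ {xs}) := hK₀.mem_closure hxsK₀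
  have h2 : K₀ \ {xs} ⊆ ((K₀ ∩ P) \ {xs}) ∪ D := by
    intro w hw
    by_cases hwD : w ∈ D
    · exact Or.inr hwD
    · exact Or.inl ⟨⟨hw.1, hK₀C hw.1, hwD⟩, hw.2⟩
  have h3 : xs ∈ M.closure (((K₀ ∩ P) \ {xs}) ∪ D) :=
    M.closure_subset_closure h2 h1
  have h4 : xs ∈ M.closure ((((K₀ ∩ P) \ {xs}) ∩ T) ∪ D) :=
    hsplit ((K₀ ∩ P) \ {xs}) (diff_subset.trans inter_subset_right) xs hxsT
      (fun hc => hc.2 rfl) h3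
  have h5 : M.closure ((((K₀ ∩ P) \ {xs}) ∩ T) ∪ D) =
      M.closure ((((K₀ ∩ P) \ {xs}) ∩ T) ∪ (B ∩ D)) := by
    rw [eq_comm, ← closure_union_closure_right_eq, hDsp]
  have h6 : (((K₀ ∩ P) \ {xs}) ∩ T) ∪ (B ∩ D) ⊆ B \ {xs} := by
    rintro w (⟨⟨⟨hw1, -⟩, hw2⟩, hw3⟩ | ⟨hw1, hw2⟩)
    · refine ⟨?_, hw2⟩
      rcases hK₀B hw1 with rfl | hb
      · exact absurd hw3 heT
      · exact hb
    · exact ⟨hw1, fun hc => hxsP.2 (hc ▸ hw2)⟩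
  have h7 : xs ∈ M.closure (B \ {xs}) := by
    rw [h5] at h4
    exact M.closure_subset_closure h6 h4
  exact hBi.notMem_closure_diff_of_mem hxsB h7

end Fact1

/-- Abstract circuit-connectivity step for an independence predicate. -/
def nuStep (nu : Set α → Prop) (E : Set α) (a b : α) : Prop :=
  ∃ K, K ⊆ E ∧ ¬ nu K ∧ (∀ z ∈ K, nu (K \ {z})) ∧ a ∈ K ∧ b ∈ K

section PartitionLemma

variable (hFl : IsFlag M k Fl) (hsp : ∀ i, SpannedBy M (Fl i) B) (hBi : M.Indep B)

include hFl hsp hBi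

lemma nuStep_part {a b : α} (h : nuStep (flagIndep M k Fl) M.E a b)
    (hC : C ∈ forestLabels M k Fl) (ha : a ∈ C \ DUnion M k Fl C) :
    b ∈ C \ DUnion M k Fl C := by
  obtain ⟨K, hKE, hdep, hmin, haK, hbK⟩ := h
  have h0 : ¬ ∀ C' ∈ forestLabels M k Fl,
      minorIndep M C' (DUnion M k Fl C') (K ∩ (C' \ DUnion M k Fl C')) := by
    intro hall
    exact hdep ((flagIndep_iff_labels hFl hsp hBi K).2 ⟨hKE, hall⟩)
  push_neg at h0
  obtain ⟨C₀, hC₀lab, hC₀⟩ := h0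
  have hKC₀ : K ⊆ C₀ \ DUnion M k Fl C₀ := by
    by_contra hc
    obtain ⟨y, hyK, hyP⟩ := not_subset.1 hc
    have h1 : flagIndep M k Fl (K \ {y}) := hmin y hyK
    have h2 := ((flagIndep_iff_labels hFl hsp hBi _).1 h1).2 C₀ hC₀lab
    have h3 : (K \ {y}) ∩ (C₀ \ DUnion M k Fl C₀) = K ∩ (C₀ \ DUnion M k Fl C₀) := by
      ext w
      constructor
      · rintro ⟨⟨hw1, -⟩, hw2⟩; exact ⟨hw1, hw2⟩
      · rintro ⟨hw1, hw2⟩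
        exact ⟨⟨hw1, fun hcy => hyP (hcy ▸ hw2)⟩, hw2⟩
    rw [h3] at h2
    exact hC₀ h2
  have hCeq : C = C₀ := parts_eq_of_mem hFl hC hC₀lab ha (hKC₀ haK)
  rw [hCeq]
  exact hKC₀ hbK

lemma nuConn_part {a b : α} (h : Relation.ReflTransGen (nuStep (flagIndep M k Fl) M.E) a b)
    (hC : C ∈ forestLabels M k Fl) (ha : a ∈ C \ DUnion M k Fl C) :
    b ∈ C \ DUnion M k Fl C := by
  induction h with
  | refl => exact ha
  | tail _ hst ih => exact nuStep_part hFl hsp hBi hst hC ih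

omit hBi

lemma part_to_nuConn (hB : Circuitous M B) (hC : C ∈ forestLabels M k Fl)
    (hx : x ∈ C \ DUnion M k Fl C) (hy : y ∈ C \ DUnion M k Fl C) :
    Relation.ReflTransGen (nuStep (flagIndep M k Fl) M.E) x y := by
  have hBi : M.Indep B := hB.1.indep
  refine Relation.ReflTransGen.mono ?_ _ _ (part_connected hFl hsp hB hC hx hy)
  rintro a b ⟨K, hKP, hq, hmin, ha, hb⟩
  refine ⟨K, hKP.trans (diff_subset.trans (lab_subset_ground hFl hC)), ?_, ?_, ha, hb⟩
  · intro hc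
    exact hq ((flagIndep_iff_piece hFl hsp hBi hC hKP).1 hc)
  · intro z hz
    exact (flagIndep_iff_piece hFl hsp hBi hC (diff_subset.trans hKP)).2 (hmin z hz)

/-- The part of a label is exactly a `nu`-connectivity class. -/
lemma part_eq_nuclass (hB : Circuitous M B) (hC : C ∈ forestLabels M k Fl)
    (hx : x ∈ C \ DUnion M k Fl C) :
    C \ DUnion M k Fl C = {y | Relation.ReflTransGen (nuStep (flagIndep M k Fl) M.E) x y} := by
  have hBi : M.Indep B := hB.1.indep
  ext y
  constructor
  · intro hy
    exact part_to_nuConn hFl hsp hB hC hx hy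
  · intro hy
    exact nuConn_part hFl hsp hBi hy hC hx

end PartitionLemma

section CrossFlag

variable {k' : ℕ} {Fl' : Fin (k' + 2) → Set α} {Z C'' W : Set α}

/-- Equality of parts across two flags with the same flag matroid. -/
lemma parts_cross (hFl : IsFlag M k Fl) (hsp : ∀ i, SpannedBy M (Fl i) B)
    (hFl' : IsFlag M k' Fl') (hsp' : ∀ i, SpannedBy M (Fl' i) B) (hB : Circuitous M B)
    (hν : ∀ I, flagIndep M k Fl I ↔ flagIndep M k' Fl' I)
    (hC : C ∈ forestLabels M k Fl) (hC'' : C'' ∈ forestLabels M k' Fl')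
    (hx : x ∈ C \ DUnion M k Fl C) (hx'' : x ∈ C'' \ DUnion M k' Fl' C'') :
    C \ DUnion M k Fl C = C'' \ DUnion M k' Fl' C'' := by
  have hstep : nuStep (flagIndep M k Fl) M.E = nuStep (flagIndep M k' Fl') M.E := by
    funext a b
    refine propext ?_
    constructor
    · rintro ⟨K, h1, h2, h3, h4, h5⟩
      exact ⟨K, h1, fun hc => h2 ((hν K).2 hc), fun z hz => (hν _).1 (h3 z hz), h4, h5⟩
    · rintro ⟨K, h1, h2, h3, h4, h5⟩
      exact ⟨K, h1, fun hc => h2 ((hν K).1 hc), fun z hz => (hν _).2 (h3 z hz), h4, h5⟩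
  rw [part_eq_nuclass hFl hsp hB hC hx, part_eq_nuclass hFl' hsp' hB hC'' hx'', hstep]

/-- Components of `Z ∩ F'` are components of `F'` inside `Z`. -/
lemma compRestrict (hFE : F ⊆ M.E) (hF' : F' ⊆ F) (hZ : IsCompOf M Z F) :
    IsCompOf M W (Z ∩ F') ↔ (IsCompOf M W F' ∧ W ⊆ Z) := by
  have hF'E : F' ⊆ M.E := hF'.trans hFE
  constructor
  · intro hW
    obtain ⟨w, hw⟩ := hW.nonempty
    have hwF' : w ∈ F' := (hW.subset hw).2
    have hwZ : w ∈ Z := (hW.subset hw).1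
    have hW' : IsCompOf M (compOf M w F') F' := isCompOf_compOf hwF'
    have hW'Z : compOf M w F' ⊆ Z :=
      hW'.subset_of_le hFE hF' hZ ⟨mem_compOf_self hwF', hwZ⟩
    have hWW' : W ⊆ compOf M w F' := by
      intro u hu
      have h0 : ConnTo (M ↾ W) w u := IsCompOf.connTo_self
        (show Z ∩ F' ⊆ M.E from (inter_subset_right).trans hF'E) hW hw hu
      have h1 : ConnTo (M ↾ (Z ∩ F')) w u := connTo_mono hW.subset
        ((inter_subset_right).trans hF'E) h0
      exact ⟨(hW.subset hu).2, connTo_mono inter_subset_right hF'E h1⟩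
    have hW'W : compOf M w F' ⊆ W := by
      have h1 : IsCompOf M (compOf M w F') (Z ∩ F') :=
        hW'.of_subset hF'E (inter_subset_right) (subset_inter hW'Z compOf_subset)
      rw [h1.eq_of_mem hW ⟨mem_compOf_self hwF', hw⟩]
    have heq : W = compOf M w F' := subset_antisymm hWW' hW'W
    rw [heq]
    exact ⟨hW', hW'Z⟩
  · rintro ⟨hW, hWZ⟩
    exact hW.of_subset hF'E inter_subset_right (subset_inter hWZ hW.subset)

/-- Components of `DUnion Z` are labels. -/
lemma child_label (hFl : IsFlag M k Fl) (hsp : ∀ i, SpannedBy M (Fl i) B) (hBi : M.Indep B)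
    (hZ : Z ∈ forestLabels M k Fl) (hW : IsCompOf M W (DUnion M k Fl Z)) :
    W ∈ forestLabels M k Fl := by
  rw [dunion_eq hFl hsp hBi hZ] at hW
  have h := (compRestrict (flnn_subset_ground hFl (birthN M k Fl Z))
    (flnn_mono hFl (Nat.sub_le _ 1)) (birth_comp hZ)).1 hW
  exact mem_forestLabels_iff.2 ⟨_, h.1⟩

/-- Every non-maximal label has a parent of which it is a `DUnion`-component. -/
lemma exists_parent (hFl : IsFlag M k Fl) (hsp : ∀ i, SpannedBy M (Fl i) B)
    (hBi : M.Indep B) (hC : C ∈ forestLabels M k Fl)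
    (hnotmax : ¬ IsCompOf M C (Flnn k Fl (k + 1))) :
    ∃ Z ∈ forestLabels M k Fl, C ⊂ Z ∧ IsCompOf M C (DUnion M k Fl Z) ∧
      birthN M k Fl C < birthN M k Fl Z := by
  obtain ⟨x, hxC⟩ := lab_nonempty hFl hC
  have hCE : C ⊆ M.E := lab_subset_ground hFl hC
  have hA : ∃ n, C ⊆ Flnn k Fl n ∧ ¬ IsCompOf M C (Flnn k Fl n) :=
    ⟨k + 1, by rw [flnn_ge hFl (le_refl _)]; exact hCE, by
      rw [flnn_ge hFl (le_refl _)]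
      rw [flnn_ge hFl (le_refl _)] at hnotmax
      exact hnotmax⟩
  set n₀ := sInf {n | C ⊆ Flnn k Fl n ∧ ¬ IsCompOf M C (Flnn k Fl n)} with hn₀
  have hmem : C ⊆ Flnn k Fl n₀ ∧ ¬ IsCompOf M C (Flnn k Fl n₀) := Nat.sInf_mem hA
  set bC := birthN M k Fl C with hbC
  have hcompC : IsCompOf M C (Flnn k Fl bC) := birth_comp hC
  have hbCn₀ : bC < n₀ := by
    by_contra hcon
    push_neg at hcon
    exact hmem.2 (hcompC.of_subset (flnn_subset_ground hFl bC)
      (flnn_mono hFl hcon) hmem.1)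
  have hxn₀ : x ∈ Flnn k Fl n₀ := hmem.1 hxC
  set Z := compOf M x (Flnn k Fl n₀) with hZdef
  have hZcomp : IsCompOf M Z (Flnn k Fl n₀) := isCompOf_compOf hxn₀
  have hZlab : Z ∈ forestLabels M k Fl := mem_forestLabels_iff.2 ⟨n₀, hZcomp⟩
  have hCZ : C ⊆ Z := by
    intro u hu
    have h1 : ConnTo (M ↾ C) x u :=
      hcompC.connTo_self (flnn_subset_ground hFl bC) hxC hu
    exact ⟨hmem.1 hu, connTo_mono hmem.1 (flnn_subset_ground hFl n₀) h1⟩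
  have hCne : C ≠ Z := by
    intro heq
    exact hmem.2 (heq ▸ hZcomp)
  have hCssZ : C ⊂ Z := ssubset_of_subset_of_ne hCZ hCne
  set bZ := birthN M k Fl Z with hbZ
  have hbZn₀ : bZ ≤ n₀ := Nat.sInf_le hZcomp
  have hbZpos : 0 < bZ := birth_pos hFl hZlab
  have hCDU : C ⊆ DUnion M k Fl Z := fun u hu => ⟨C, ⟨hC, hCssZ⟩, hu⟩
  have hDUeq : DUnion M k Fl Z = Z ∩ Flnn k Fl (bZ - 1) := dunion_eq hFl hsp hBi hZlab
  have hCF : C ⊆ Flnn k Fl (bZ - 1) := by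
    intro u hu
    exact (hDUeq ▸ hCDU hu).2
  have hCcomp' : IsCompOf M C (Flnn k Fl (bZ - 1)) := by
    by_contra hcon
    have : n₀ ≤ bZ - 1 := Nat.sInf_le ⟨hCF, hcon⟩
    omega
  have hCcompDU : IsCompOf M C (DUnion M k Fl Z) := by
    rw [hDUeq]
    exact (compRestrict (flnn_subset_ground hFl bZ) (flnn_mono hFl (Nat.sub_le _ 1))
      (birth_comp hZlab)).2 ⟨hCcomp', hCZ⟩
  have hbirth : birthN M k Fl C < birthN M k Fl Z := by
    have h1 : birthN M k Fl C ≤ bZ - 1 := Nat.sInf_le hCcomp'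
    omega
  exact ⟨Z, hZlab, hCssZ, hCcompDU, hbirth⟩

/-- Transport of piece closures across flags. -/
lemma closure_transport (hFl : IsFlag M k Fl) (hsp : ∀ i, SpannedBy M (Fl i) B)
    (hFl' : IsFlag M k' Fl') (hsp' : ∀ i, SpannedBy M (Fl' i) B) (hBi : M.Indep B)
    (hν : ∀ I, flagIndep M k Fl I ↔ flagIndep M k' Fl' I)
    (hC : C ∈ forestLabels M k Fl) (hC'' : C'' ∈ forestLabels M k' Fl')
    (hpart : C \ DUnion M k Fl C = C'' \ DUnion M k' Fl' C'')
    (hY : Y ⊆ C \ DUnion M k Fl C) (hxP : x ∈ C \ DUnion M k Fl C) (hxY : x ∉ Y) :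
    x ∈ M.closure (Y ∪ DUnion M k Fl C) ↔ x ∈ M.closure (Y ∪ DUnion M k' Fl' C'') := by
  set D := DUnion M k Fl C with hD
  set D' := DUnion M k' Fl' C'' with hD'
  set P := C \ DUnion M k Fl C with hP
  have hPE : P ⊆ M.E := diff_subset.trans (lab_subset_ground hFl hC)
  have hDE : D ⊆ M.E := dunion_subset.trans (lab_subset_ground hFl hC)
  have hD'E : D' ⊆ M.E := dunion_subset.trans (lab_subset_ground hFl' hC'')
  have hdisjPD : Disjoint P D := by
    rw [Set.disjoint_left]
    exact fun w hw => hw.2 ∘ fun hd => hd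
  have hdisjPD' : Disjoint P D' := by
    rw [Set.disjoint_left]
    intro w hw
    exact (hpart ▸ hw).2 ∘ fun hd => hd
  have hYE : Y ⊆ M.E := hY.trans hPE
  have hxE : x ∈ M.E := hPE hxP
  have hxD : x ∉ D := fun hc => (hdisjPD.ne_of_mem hxP hc) rfl
  have hxD' : x ∉ D' := fun hc => (hdisjPD'.ne_of_mem hxP hc) rfl
  obtain ⟨Jx, hJxY, hJxq, hJxmax⟩ := exists_qbasis hDE hYE (hdisjPD.mono_left hY)
  -- translation of q-statements
  have htrans : ∀ W, W ⊆ P → (qIndep M D W ↔ qIndep M D' W) := by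
    intro W hW
    rw [← flagIndep_iff_piece hFl hsp hBi hC hW,
      ← flagIndep_iff_piece hFl' hsp' hBi hC'' (hpart ▸ hW)]
    exact hν W
  have hJxq' : qIndep M D' Jx := (htrans Jx (hJxY.trans hY)).1 hJxq
  have hJxmax' : ∀ y ∈ Y \ Jx, ¬ qIndep M D' (insert y Jx) := by
    intro y hy hc
    refine hJxmax y hy ?_
    refine (htrans (insert y Jx) ?_).2 hc
    exact insert_subset (hY hy.1) (hJxY.trans hY)
  have h1 := qchar hDE hYE (hdisjPD.mono_left hY) hJxY hJxq hJxmax hxE hxY hxD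
  have h2 := qchar hD'E hYE (hdisjPD'.mono_left hY) hJxY hJxq' hJxmax' hxE hxY hxD'
  rw [h1, h2]
  have h3 : insert x Jx ⊆ P := insert_subset hxP (hJxY.trans hY)
  rw [not_iff_not]
  exact htrans _ h3

end CrossFlag

section KeyStep

variable {k' : ℕ} {Fl' : Fin (k' + 2) → Set α} {Z : Set α}

/-- KEY STEP : if `Z` is a label of both flags, its `DUnion`s agree. -/
lemma dunion_cross (hFl : IsFlag M k Fl) (hsp : ∀ i, SpannedBy M (Fl i) B)
    (hFl' : IsFlag M k' Fl') (hsp' : ∀ i, SpannedBy M (Fl' i) B) (hB : Circuitous M B)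
    (hν : ∀ I, flagIndep M k Fl I ↔ flagIndep M k' Fl' I)
    (hZ : Z ∈ forestLabels M k Fl) (hZ' : Z ∈ forestLabels M k' Fl') :
    DUnion M k Fl Z = DUnion M k' Fl' Z := by
  have hBi : M.Indep B := hB.1.indep
  set D := DUnion M k Fl Z with hD
  set D' := DUnion M k' Fl' Z with hD'
  set P := Z \ D with hP
  set P' := Z \ D' with hP'
  have hDZ : D ⊆ Z := dunion_subset
  have hD'Z : D' ⊆ Z := dunion_subset
  suffices hPP : P = P' by
    have h1 : Z \ P = D := by rw [hP, diff_diff_cancel_left hDZ]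
    have h2 : Z \ P' = D' := by rw [hP', diff_diff_cancel_left hD'Z]
    rw [← h1, ← h2, hPP]
  by_contra hPP
  have hZE : Z ⊆ M.E := lab_subset_ground hFl hZ
  -- minimal labels of points of the two parts
  obtain ⟨w', hw'P'⟩ : P'.Nonempty := by
    obtain ⟨t, ht1, ht2⟩ := exists_of_ssubset (dunion_ssubset hFl' hsp' hBi hZ')
    exact ⟨t, ht1, ht2⟩
  obtain ⟨w, hwP⟩ : P.Nonempty := by
    obtain ⟨t, ht1, ht2⟩ := exists_of_ssubset (dunion_ssubset hFl hsp hBi hZ)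
    exact ⟨t, ht1, ht2⟩
  obtain ⟨C', hC'lab, hw'C', hC'min⟩ := exists_min_label hFl (hZE hw'P'.1)
  obtain ⟨W', hW'lab, hwW', hW'min⟩ := exists_min_label hFl' (hZE hwP.1)
  have hpartC' : C' \ DUnion M k Fl C' = P' :=
    parts_cross hFl hsp hFl' hsp' hB hν hC'lab hZ' hw'C' hw'P'
  have hpartW' : W' \ DUnion M k' Fl' W' = P := by
    have := parts_cross hFl hsp hFl' hsp' hB hν hZ hW'lab hwP hwW'
    exact this.symm
  -- C' ⊊ Z
  have hC'Z : C' ⊆ Z := by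
    rcases lab_nested hFl hC'lab hZ ⟨w', hw'C'.1, hw'P'.1⟩ with h | h
    · exact h
    · rcases eq_or_ne Z C' with heq | hne
      · exact heq.symm.subset
      · exfalso
        have : Z ⊆ DUnion M k Fl C' := fun u hu => ⟨Z, ⟨hZ, ssubset_of_subset_of_ne h hne⟩, hu⟩
        exact hw'C'.2 (this hw'P'.1)
  have hC'ne : C' ≠ Z := by
    intro heq
    rw [heq] at hpartC'
    exact hPP hpartC'
  -- W' ⊊ Z (in the second flag)
  have hW'Z : W' ⊆ Z := by
    rcases lab_nested hFl' hW'lab hZ' ⟨w, hwW'.1, hwP.1⟩ with h | h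
    · exact h
    · rcases eq_or_ne Z W' with heq | hne
      · exact heq.symm.subset
      · exfalso
        have : Z ⊆ DUnion M k' Fl' W' := fun u hu => ⟨Z, ⟨hZ', ssubset_of_subset_of_ne h hne⟩, hu⟩
        exact hwW'.2 (this hwP.1)
  have hW'ne : W' ≠ Z := by
    intro heq
    rw [heq] at hpartW'
    exact hPP hpartW'.symm
  -- circuitous witness for Z
  obtain ⟨n, hcomp⟩ := mem_forestLabels_iff.1 hZ
  obtain ⟨e, heEB, K₀, hK₀B, hK₀, hK₀cl⟩ := hB.2 Z
    (by rw [← lab_closure hFl hsp hBi hZ]; exact flat_closure M Z)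
    (hcomp.mconnected (flnn_subset_ground hFl n))
    ⟨B ∩ Z, inter_subset_left, lab_span hFl hsp hBi hZ⟩
  have hK₀Z : K₀ ⊆ Z := by rw [← hK₀cl]; exact M.subset_closure _ hK₀.subset_ground
  -- disjointness of the two parts (as parts of the first flag)
  have hPP'disj : ∀ u, u ∈ P → u ∈ P' → False := by
    intro u huP huP'
    rw [← hpartC'] at huP'
    exact hC'ne (parts_eq_of_mem hFl hC'lab hZ huP' huP)
  by_cases he : e ∈ P
  · -- work with P' and the pair (C', Z)
    have heP' : e ∉ P' := fun hc => hPP'disj e he hc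
    obtain ⟨xs, hxsK₀, hxsP'⟩ : (K₀ ∩ P').Nonempty := by
      by_contra hc
      rw [not_nonempty_iff_eq_empty] at hc
      have hK₀D' : K₀ ⊆ D' := by
        intro u hu
        by_contra huD'
        exact absurd (show u ∈ K₀ ∩ P' from ⟨hu, hK₀Z hu, huD'⟩) (by rw [hc]; exact notMem_empty u)
      have h1 : Z ⊆ M.closure D' := by
        rw [← hK₀cl]
        exact M.closure_subset_closure hK₀D'
      rw [dunion_closure hFl' hsp' hBi hZ'] at h1
      obtain ⟨t, ht1, ht2⟩ := exists_of_ssubset (dunion_ssubset hFl' hsp' hBi hZ')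
      exact ht2 (h1 ht1)
    have hxsB : xs ∈ B := by
      rcases hK₀B hxsK₀ with rfl | hb
      · exact absurd hxsP' heP'
      · exact hb
    have h1 : xs ∈ M.closure (K₀ \ {xs}) := hK₀.mem_closure hxsK₀
    have h2 : K₀ \ {xs} ⊆ ((K₀ ∩ P') \ {xs}) ∪ D' := by
      intro u hu
      by_cases huD' : u ∈ D'
      · exact Or.inr huD'
      · exact Or.inl ⟨⟨hu.1, hK₀Z hu.1, huD'⟩, hu.2⟩
    have h3 : xs ∈ M.closure (((K₀ ∩ P') \ {xs}) ∪ D') := M.closure_subset_closure h2 h1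
    -- transport from (Z, L') piece to (C', L) piece
    have h4 : xs ∈ M.closure (((K₀ ∩ P') \ {xs}) ∪ DUnion M k Fl C') := by
      refine (closure_transport hFl hsp hFl' hsp' hBi hν hC'lab hZ' ?_ ?_ ?_ ?_).2 h3
      · exact hpartC'
      · rw [hpartC']
        exact (diff_subset).trans inter_subset_right
      · rw [hpartC']
        exact hxsP'
      · exact fun hcon => hcon.2 rfl
    have h5 : M.closure (((K₀ ∩ P') \ {xs}) ∪ DUnion M k Fl C') =
        M.closure (((K₀ ∩ P') \ {xs}) ∪ (B ∩ DUnion M k Fl C')) := by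
      rw [eq_comm, ← closure_union_closure_right_eq, dunion_span hFl hsp hBi hC'lab]
    have h6 : ((K₀ ∩ P') \ {xs}) ∪ (B ∩ DUnion M k Fl C') ⊆ B \ {xs} := by
      rintro u (⟨⟨hu1, hu2⟩, hu3⟩ | ⟨hu1, hu2⟩)
      · refine ⟨?_, hu3⟩
        rcases hK₀B hu1 with rfl | hb
        · exact absurd hu2 heP'
        · exact hb
      · refine ⟨hu1, ?_⟩
        rintro rfl
        rw [← hpartC'] at hxsP'
        exact hxsP'.2 hu2
    rw [h5] at h4
    exact hBi.notMem_closure_diff_of_mem hxsB (M.closure_subset_closure h6 h4)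
  · -- work with P and the pair (Z, W')
    obtain ⟨xs, hxsK₀, hxsP⟩ : (K₀ ∩ P).Nonempty := by
      by_contra hc
      rw [not_nonempty_iff_eq_empty] at hc
      have hK₀D : K₀ ⊆ D := by
        intro u hu
        by_contra huD
        exact absurd (show u ∈ K₀ ∩ P from ⟨hu, hK₀Z hu, huD⟩) (by rw [hc]; exact notMem_empty u)
      have h1 : Z ⊆ M.closure D := by
        rw [← hK₀cl]
        exact M.closure_subset_closure hK₀D
      rw [dunion_closure hFl hsp hBi hZ] at h1
      obtain ⟨t, ht1, ht2⟩ := exists_of_ssubset (dunion_ssubset hFl hsp hBi hZ)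
      exact ht2 (h1 ht1)
    have hxsB : xs ∈ B := by
      rcases hK₀B hxsK₀ with rfl | hb
      · exact absurd hxsP he
      · exact hb
    have h1 : xs ∈ M.closure (K₀ \ {xs}) := hK₀.mem_closure hxsK₀
    have h2 : K₀ \ {xs} ⊆ ((K₀ ∩ P) \ {xs}) ∪ D := by
      intro u hu
      by_cases huD : u ∈ D
      · exact Or.inr huD
      · exact Or.inl ⟨⟨hu.1, hK₀Z hu.1, huD⟩, hu.2⟩
    have h3 : xs ∈ M.closure (((K₀ ∩ P) \ {xs}) ∪ D) := M.closure_subset_closure h2 h1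
    have h4 : xs ∈ M.closure (((K₀ ∩ P) \ {xs}) ∪ DUnion M k' Fl' W') := by
      refine (closure_transport hFl hsp hFl' hsp' hBi hν hZ hW'lab ?_ ?_ ?_ ?_).1 h3
      · exact hpartW'.symm
      · exact (diff_subset).trans inter_subset_right
      · exact hxsP
      · exact fun hcon => hcon.2 rfl
    have h5 : M.closure (((K₀ ∩ P) \ {xs}) ∪ DUnion M k' Fl' W') =
        M.closure (((K₀ ∩ P) \ {xs}) ∪ (B ∩ DUnion M k' Fl' W')) := by
      rw [eq_comm, ← closure_union_closure_right_eq, dunion_span hFl' hsp' hBi hW'lab]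
    have h6 : ((K₀ ∩ P) \ {xs}) ∪ (B ∩ DUnion M k' Fl' W') ⊆ B \ {xs} := by
      rintro u (⟨⟨hu1, hu2⟩, hu3⟩ | ⟨hu1, hu2⟩)
      · refine ⟨?_, hu3⟩
        rcases hK₀B hu1 with rfl | hb
        · exact absurd hu2 he
        · exact hb
      · refine ⟨hu1, ?_⟩
        rintro rfl
        rw [← hpartW'] at hxsP
        exact hxsP.2 hu2
    rw [h5] at h4
    exact hBi.notMem_closure_diff_of_mem hxsB (M.closure_subset_closure h6 h4)

end KeyStep

section Main

variable {k' : ℕ} {Fl' : Fin (k' + 2) → Set α}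

lemma labels_sub (hFl : IsFlag M k Fl) (hsp : ∀ i, SpannedBy M (Fl i) B)
    (hFl' : IsFlag M k' Fl') (hsp' : ∀ i, SpannedBy M (Fl' i) B) (hB : Circuitous M B)
    (hν : ∀ I, flagIndep M k Fl I ↔ flagIndep M k' Fl' I) :
    forestLabels M k Fl ⊆ forestLabels M k' Fl' := by
  have hBi : M.Indep B := hB.1.indep
  have main : ∀ n : ℕ, ∀ C, C ∈ forestLabels M k Fl →
      k + 2 - birthN M k Fl C ≤ n → C ∈ forestLabels M k' Fl' := by
    intro n
    induction n with
    | zero =>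
        intro C hC h0
        have h1 := birth_le hFl hC
        omega
    | succ n ih =>
        intro C hC hle
        by_cases hmax : IsCompOf M C (Flnn k Fl (k + 1))
        · rw [flnn_ge hFl (le_refl _)] at hmax
          rw [← flnn_ge hFl' (le_refl (k' + 1))] at hmax
          exact mem_forestLabels_iff.2 ⟨k' + 1, hmax⟩
        · obtain ⟨Z, hZlab, hCZ, hCcomp, hbirth⟩ := exists_parent hFl hsp hBi hC hmax
          have hZbound := birth_le hFl hZlab
          have hZ' : Z ∈ forestLabels M k' Fl' := ih Z hZlab (by omega)
          have hDU := dunion_cross hFl hsp hFl' hsp' hB hν hZlab hZ'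
          rw [hDU] at hCcomp
          exact child_label hFl' hsp' hBi hZ' hCcomp
  intro C hC
  exact main (k + 2) C hC (by omega)

theorem circuitous_forest_determines' (hB : Circuitous M B)
    (hFl : IsFlag M k Fl) (hFl' : IsFlag M k' Fl')
    (hsp : ∀ i, SpannedBy M (Fl i) B) (hsp' : ∀ i, SpannedBy M (Fl' i) B) :
    (∀ I, flagIndep M k Fl I ↔ flagIndep M k' Fl' I) ↔
      forestLabels M k Fl = forestLabels M k' Fl' := by
  have hBi : M.Indep B := hB.1.indep
  constructor
  · intro hν
    refine subset_antisymm (labels_sub hFl hsp hFl' hsp' hB hν) ?_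
    exact labels_sub hFl' hsp' hFl hsp hB (fun I => (hν I).symm)
  · intro hlab I
    have hDU : ∀ C, DUnion M k Fl C = DUnion M k' Fl' C := by
      intro C
      unfold DUnion
      rw [hlab]
    rw [flagIndep_iff_labels hFl hsp hBi, flagIndep_iff_labels hFl' hsp' hBi, hlab]
    constructor
    · rintro ⟨h1, h2⟩
      refine ⟨h1, fun C hC => ?_⟩
      rw [← hDU]
      exact h2 C hC
    · rintro ⟨h1, h2⟩
      refine ⟨h1, fun C hC => ?_⟩
      rw [hDU]
      exact h2 C hC

end Main

/-- for flags of flats all spanned by subsets of a circuitous base `B`,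
`M_𝓕 = M_𝓕'` if and only if the labelled forests `T_𝓕` and `T_𝓕'` coincide. -/
theorem circuitous_forest_determines (M : Matroid α) (B : Set α) (hB : Circuitous M B)
    (k k' : ℕ) (Fl : Fin (k + 2) → Set α) (Fl' : Fin (k' + 2) → Set α)
    (hFl : IsFlag M k Fl) (hFl' : IsFlag M k' Fl')
    (hsp : ∀ i, SpannedBy M (Fl i) B) (hsp' : ∀ i, SpannedBy M (Fl' i) B) :
    (∀ I, flagIndep M k Fl I ↔ flagIndep M k' Fl' I) ↔
      forestLabels M k Fl = forestLabels M k' Fl' :=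
  circuitous_forest_determines' hB hFl hFl' hsp hsp'

end BergmanPaper
end

section
/- Let M be a matroid and N a set of connected flats of M that is nested. If G_1, …, G_k is an ordering of N such that i < j implies G_i ⊉ G_j, and F_i = G_1 ∨ ⋯ ∨ G_i, then the connected components of F_i are exactly the maximal elements among {G_1, …, G_i}; in particular F_i is the disjoint union of these maximal G_j's. -/
open Set Matroid

namespace BergmanPaper

variable {α : Type*}

section Aux

variable {M : Matroid α}

lemma connTo_symm_s13 (M : Matroid α) : Symmetric (ConnTo M) :=
  fun x y h => (@Relation.ReflTransGen.symmetric _ (fun x y => ∃ C, MCircuit M C ∧ x ∈ C ∧ y ∈ C)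
    (⟨fun _ _ ⟨C, hC, hx, hy⟩ => ⟨C, hC, hy, hx⟩⟩)).symm x y h

lemma mcircuit_restrict_iff {C F : Set α} (hF : F ⊆ M.E) :
    MCircuit (M ↾ F) C ↔ MCircuit M C ∧ C ⊆ F := by
  constructor
  · rintro ⟨hdep, hmin⟩
    rw [restrict_dep_iff] at hdep
    exact ⟨⟨⟨hdep.1, hdep.2.trans hF⟩, fun x hx => (restrict_indep_iff.1 (hmin x hx)).1⟩,
      hdep.2⟩
  · rintro ⟨⟨hdep, hmin⟩, hCF⟩
    exact ⟨restrict_dep_iff.2 ⟨hdep.1, hCF⟩,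
      fun x hx => restrict_indep_iff.2 ⟨hmin x hx, diff_subset.trans hCF⟩⟩

lemma connTo_mono_s13 {G F : Set α} (hGF : G ⊆ F) (hF : F ⊆ M.E) {e f : α}
    (h : ConnTo (M ↾ G) e f) : ConnTo (M ↾ F) e f := by
  refine Relation.ReflTransGen.mono (p := fun x y => ∃ C, MCircuit (M ↾ F) C ∧ x ∈ C ∧ y ∈ C)
    (fun x y (⟨C, hC, hx, hy⟩ : ∃ C, MCircuit (M ↾ G) C ∧ x ∈ C ∧ y ∈ C) => ?_) e f h
  obtain ⟨hC', hCG⟩ := (mcircuit_restrict_iff (hGF.trans hF)).1 hC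
  exact ⟨C, (mcircuit_restrict_iff hF).2 ⟨hC', hCG.trans hGF⟩, hx, hy⟩

lemma exists_mcircuit_aux (M : Matroid α) :
    ∀ (n : ℕ) (D : Set α), D.ncard ≤ n → M.Dep D → D.Finite → ∃ C ⊆ D, MCircuit M C := by
  intro n
  induction n with
  | zero =>
    intro D hn hD hfin
    rw [Nat.le_zero, Set.ncard_eq_zero hfin] at hn
    exact absurd (hn ▸ M.empty_indep) hD.not_indep
  | succ n ih =>
    intro D hn hD hfin
    by_cases h : ∀ x ∈ D, M.Indep (D \ {x})
    · exact ⟨D, Subset.rfl, hD, h⟩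
    · push_neg at h
      obtain ⟨x, hx, hxi⟩ := h
      have hdep : M.Dep (D \ {x}) := ⟨hxi, diff_subset.trans hD.subset_ground⟩
      have hlt : (D \ {x}).ncard < D.ncard := Set.ncard_diff_singleton_lt_of_mem hx hfin
      obtain ⟨C, hCD, hC⟩ := ih (D \ {x}) (by omega) hdep (hfin.subset diff_subset)
      exact ⟨C, hCD.trans diff_subset, hC⟩

lemma dep_exists_mcircuit {D : Set α} (hD : M.Dep D) (hfin : D.Finite) :
    ∃ C ⊆ D, MCircuit M C :=
  exists_mcircuit_aux M D.ncard D le_rfl hD hfin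

lemma exists_mcircuit_of_mem_closure_s13 (hE : M.E.Finite) {x : α} {T : Set α}
    (hx : x ∈ M.closure T) (hxT : x ∉ T) :
    ∃ C, MCircuit M C ∧ x ∈ C ∧ C ⊆ insert x T := by
  obtain ⟨I, hI⟩ := M.exists_isBasis' T
  have hxI : x ∈ M.closure I := by rw [hI.closure_eq_closure]; exact hx
  have hdep : M.Dep (insert x I) :=
    hI.indep.insert_dep_iff.2 ⟨hxI, fun h => hxT (hI.subset h)⟩
  obtain ⟨C, hCsub, hC⟩ := dep_exists_mcircuit hdep (hE.subset hdep.subset_ground)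
  have hxC : x ∈ C := by
    by_contra hxC
    exact hC.1.not_indep (hI.indep.subset fun z hz => (hCsub hz).resolve_left
      (fun h => hxC (h ▸ hz)))
  exact ⟨C, hC, hxC, hCsub.trans (insert_subset_insert hI.subset)⟩

lemma MCircuit.mem_closure_diff {C : Set α} (hC : MCircuit M C) {x : α} (hx : x ∈ C) :
    x ∈ M.closure (C \ {x}) := by
  have hdep : M.Dep (insert x (C \ {x})) := by
    rw [insert_diff_singleton, insert_eq_self.2 hx]; exact hC.1
  exact ((hC.2 x hx).insert_dep_iff.1 hdep).1

/-- Key lemma: any connected component of the join of an antichain contained in a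
nested set equals one of the elements of the antichain. -/
lemma comp_of_nested {N : Set (Set α)} (hE : M.E.Finite) (hN : IsNestedSet M N)
    {A : Set (Set α)} (hAN : A ⊆ N) (hA : IsAntichain (· ⊆ ·) A) (hAne : A.Nonempty)
    {e : α} (he : e ∈ M.closure (⋃₀ A)) :
    ∃ G ∈ A, {f | f ∈ M.closure (⋃₀ A) ∧ ConnTo (M ↾ M.closure (⋃₀ A)) e f} = G := by
  set S : Set α := ⋃₀ A with hS
  set J : Set α := M.closure S with hJdef
  set c : Set α := {f | f ∈ J ∧ ConnTo (M ↾ J) e f} with hc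
  have hflat : ∀ G ∈ A, M.IsFlat G := fun G hG => (hN.1 G (hAN hG)).1
  have hconn : ∀ G ∈ A, MConnected (M ↾ G) := fun G hG => (hN.1 G (hAN hG)).2
  have hSE : S ⊆ M.E := fun x ⟨G, hG, hx⟩ => (hflat G hG).subset_ground hx
  have hJE : J ⊆ M.E := M.closure_subset_ground S
  have hSJ : S ⊆ J := M.subset_closure S hSE
  have hcJ : c ⊆ J := fun z hz => hz.1
  have hec : e ∈ c := ⟨he, Relation.ReflTransGen.refl⟩
  -- one circuit step preserves membership in c
  have hstep : ∀ z ∈ c, ∀ w C, MCircuit (M ↾ J) C → z ∈ C → w ∈ C → w ∈ c := by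
    rintro z hz w C hC hzC hwC
    have hCJ : C ⊆ J := ((mcircuit_restrict_iff hJE).1 hC).2
    exact ⟨hCJ hwC, hz.2.tail ⟨C, hC, hzC, hwC⟩⟩
  -- a G meeting c is contained in c
  have hGc : ∀ G ∈ A, ∀ g ∈ G, g ∈ c → G ⊆ c := by
    intro G hG g hg hgc g' hg'
    have hGS : G ⊆ S := fun x hx => ⟨G, hG, hx⟩
    have hGJ : G ⊆ J := hGS.trans hSJ
    have h1 : ConnTo (M ↾ G) g g' := (hconn G hG).2 g hg g' hg'
    exact ⟨hGJ hg', hgc.2.trans (connTo_mono_s13 hGJ hJE h1)⟩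
  set Ac : Set (Set α) := {G ∈ A | G ⊆ c} with hAc
  have hAcA : Ac ⊆ A := fun G hG => hG.1
  have hUc : ⋃₀ Ac ⊆ c := fun x ⟨G, hG, hx⟩ => hG.2 hx
  have hUS : ⋃₀ Ac ⊆ S := sUnion_subset_sUnion hAcA
  -- c ⊆ closure (⋃₀ Ac)
  have hfwd : c ⊆ M.closure (⋃₀ Ac) := by
    intro x hx
    by_cases hxS : x ∈ S
    · obtain ⟨G, hG, hxG⟩ := hxS
      exact M.subset_closure _ (hUS.trans hSE) ⟨G, ⟨hG, hGc G hG x hxG hx⟩, hxG⟩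
    · obtain ⟨C, hC, hxC, hCS⟩ := exists_mcircuit_of_mem_closure_s13 hE hx.1 hxS
      have hCJ : C ⊆ J := hCS.trans (insert_subset hx.1 hSJ)
      have hCr : MCircuit (M ↾ J) C := (mcircuit_restrict_iff hJE).2 ⟨hC, hCJ⟩
      have hCc : C ⊆ c := fun z hz => hstep x hx z C hCr hxC hz
      have hsub : C \ {x} ⊆ ⋃₀ Ac := by
        rintro z ⟨hzC, hzx⟩
        obtain ⟨G, hG, hzG⟩ := (hCS hzC).resolve_left hzx
        exact ⟨G, ⟨hG, hGc G hG z hzG (hCc hzC)⟩, hzG⟩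
      exact M.closure_subset_closure hsub (hC.mem_closure_diff hxC)
  -- Ac is nonempty
  have hAcne : Ac.Nonempty := by
    by_contra hemp
    rw [Set.not_nonempty_iff_eq_empty] at hemp
    have hloop : e ∈ M.closure ∅ := by
      have := hfwd hec
      rwa [hemp, sUnion_empty] at this
    obtain ⟨G, hG⟩ := hAne
    have heG : e ∈ G := (hflat G hG).closure ▸ M.closure_subset_closure (empty_subset G) hloop
    exact absurd (show G ∈ Ac from ⟨hG, hGc G hG e heG hec⟩) (by simp [hemp])
  -- closure (⋃₀ Ac) ⊆ c
  have hbwd : M.closure (⋃₀ Ac) ⊆ c := by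
    intro x hx'
    have hxJ : x ∈ J := M.closure_subset_closure hUS hx'
    by_cases hxU : x ∈ ⋃₀ Ac
    · exact hUc hxU
    · obtain ⟨C, hC, hxC, hCU⟩ := exists_mcircuit_of_mem_closure_s13 hE hx' hxU
      by_cases hCx : C ⊆ {x}
      · -- C = {x}, so x is a loop, contained in every flat
        have hCeq : C = {x} := (hCx.antisymm (singleton_subset_iff.2 hxC))
        have hxloop : x ∈ M.closure ∅ := by
          have hdep : M.Dep (insert x (∅ : Set α)) := by
            rw [insert_empty_eq, ← hCeq]; exact hC.1
          exact (M.empty_indep.insert_dep_iff.1 hdep).1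
        obtain ⟨G, hG⟩ := hAcne
        have hxG : x ∈ G := (hflat G hG.1).closure ▸
          M.closure_subset_closure (empty_subset G) hxloop
        exact hG.2 hxG
      · obtain ⟨y, hyC, hyx⟩ := not_subset.1 hCx
        have hyU : y ∈ ⋃₀ Ac := (hCU hyC).resolve_left hyx
        have hCJ : C ⊆ J := hCU.trans (insert_subset hxJ (hUS.trans hSJ))
        have hCr : MCircuit (M ↾ J) C := (mcircuit_restrict_iff hJE).2 ⟨hC, hCJ⟩
        exact hstep y (hUc hyU) x C hCr hyC hxC
  have hceq : c = M.closure (⋃₀ Ac) := hfwd.antisymm hbwd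
  have hcE : c ⊆ M.E := hcJ.trans hJE
  -- M ↾ c is connected
  have hdown : ∀ {f g : α}, ConnTo (M ↾ J) f g → f ∈ c → g ∈ c ∧ ConnTo (M ↾ c) f g := by
    intro f g h hf
    induction h with
    | refl => exact ⟨hf, Relation.ReflTransGen.refl⟩
    | @tail b g hab hbc ih =>
      obtain ⟨hb, hfb⟩ := ih
      obtain ⟨C, hC, hbC, hgC⟩ := hbc
      have hCc : C ⊆ c := fun z hz => hstep b hb z C hC hbC hz
      have hg : g ∈ c := hCc hgC
      have hCr : MCircuit (M ↾ c) C :=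
        (mcircuit_restrict_iff hcE).2 ⟨((mcircuit_restrict_iff hJE).1 hC).1, hCc⟩
      exact ⟨hg, hfb.tail ⟨C, hCr, hbC, hgC⟩⟩
  have hMc : MConnected (M ↾ c) := by
    refine ⟨by rw [restrict_ground_eq]; exact ⟨e, hec⟩, ?_⟩
    intro f hf g hg
    rw [restrict_ground_eq] at hf hg
    have hfg : ConnTo (M ↾ J) f g := (connTo_symm_s13 (M ↾ J) hf.2).trans hg.2
    exact (hdown hfg hf).2
  -- nestedness forces Ac to be a singleton
  have hsub : Ac.Subsingleton := by
    by_contra hns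
    have := hN.2 Ac (hAcA.trans hAN) (hA.subset hAcA) hns
    rw [flatJoin] at this
    exact this (hceq ▸ hMc)
  obtain ⟨G, hG⟩ := hAcne
  have : Ac = {G} := hsub.eq_singleton_of_mem hG
  refine ⟨G, hG.1, ?_⟩
  show c = G
  rw [hceq, this, sUnion_singleton]
  exact (hflat G hG.1).closure

end Aux

/-- for a suitably ordered nested set, the connected components of
`Fᵢ = G₁ ∨ ⋯ ∨ Gᵢ` are exactly the maximal elements among `G₁, …, Gᵢ`, and `Fᵢ` is
their (disjoint) union. -/
theorem nested_set_components (M : Matroid α) (hE : M.E.Finite)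
    (k : ℕ) (G : Fin k → Set α) (hinj : Function.Injective G)
    (hnest : IsNestedSet M (Set.range G))
    (hord : ∀ i j : Fin k, i < j → ¬ G j ⊆ G i)
    (Fl : Fin k → Set α) (hFl : ∀ i, Fl i = M.closure (⋃ j ∈ Set.Iic i, G j)) :
    (∀ i C, IsCompOf M C (Fl i) ↔
      ∃ j ≤ i, C = G j ∧ ∀ j' ≤ i, G j ⊆ G j' → G j = G j') ∧
    (∀ i, Fl i = ⋃ j ∈ {j | j ≤ i ∧ ∀ j' ≤ i, G j ⊆ G j' → G j = G j'}, G j) := by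
  have hGE : ∀ j, M.IsFlat (G j) := fun j => (hnest.1 (G j) ⟨j, rfl⟩).1
  have hGconn : ∀ j, MConnected (M ↾ G j) := fun j => (hnest.1 (G j) ⟨j, rfl⟩).2
  have hcover : ∀ i : Fin k, ∀ j, j ≤ i →
      ∃ m, m ≤ i ∧ G j ⊆ G m ∧ ∀ j', j' ≤ i → G m ⊆ G j' → G m = G j' := by
    intro i j hj
    obtain ⟨m, hm, hmax⟩ := Set.Finite.exists_maximalFor G {j' | j' ≤ i ∧ G j ⊆ G j'}
      (Set.toFinite _) ⟨j, hj, Subset.rfl⟩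
    exact ⟨m, hm.1, hm.2, fun j' hj' hsub => hsub.antisymm (hmax ⟨hj', hm.2.trans hsub⟩ hsub)⟩
  have H : ∀ i : Fin k,
      (∀ C, IsCompOf M C (Fl i) ↔
        ∃ j ≤ i, C = G j ∧ ∀ j' ≤ i, G j ⊆ G j' → G j = G j') ∧
      Fl i = ⋃ j ∈ {j | j ≤ i ∧ ∀ j' ≤ i, G j ⊆ G j' → G j = G j'}, G j := by
    intro i
    set Ai : Set (Set α) := G '' {j | j ≤ i ∧ ∀ j' ≤ i, G j ⊆ G j' → G j = G j'} with hAi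
    have hUE : (⋃ j ∈ Set.Iic i, G j) ⊆ M.E :=
      iUnion₂_subset fun j _ => (hGE j).subset_ground
    have hUeq : (⋃ j ∈ Set.Iic i, G j) = ⋃₀ Ai := by
      apply Subset.antisymm
      · intro x hx
        simp only [mem_iUnion, Set.mem_Iic, exists_prop] at hx
        obtain ⟨j, hj, hxj⟩ := hx
        obtain ⟨m, hm, hsub, hmax⟩ := hcover i j hj
        exact ⟨G m, ⟨m, ⟨hm, hmax⟩, rfl⟩, hsub hxj⟩
      · rintro x ⟨_, ⟨j, hj, rfl⟩, hxj⟩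
        exact mem_biUnion (Set.mem_Iic.2 hj.1) hxj
    have hFlJ : Fl i = M.closure (⋃₀ Ai) := by rw [hFl i, hUeq]
    have hFlE : Fl i ⊆ M.E := by rw [hFl i]; exact M.closure_subset_ground _
    have hGFl : ∀ j, j ≤ i → G j ⊆ Fl i := fun j hj => by
      rw [hFl i]
      exact (subset_biUnion_of_mem (Set.mem_Iic.2 hj)).trans (M.subset_closure _ hUE)
    have hAiN : Ai ⊆ Set.range G := by rintro _ ⟨j, _, rfl⟩; exact ⟨j, rfl⟩
    have hAianti : IsAntichain (· ⊆ ·) Ai := by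
      rintro _ ⟨a, ha, rfl⟩ _ ⟨b, hb, rfl⟩ hne hsub
      exact hne (ha.2 b hb.1 hsub)
    have hAine : Ai.Nonempty := by
      obtain ⟨m, hm, _, hmax⟩ := hcover i i le_rfl
      exact ⟨G m, m, ⟨hm, hmax⟩, rfl⟩
    have hcomp : ∀ e ∈ Fl i, ∃ G' ∈ Ai,
        {f | f ∈ Fl i ∧ ConnTo (M ↾ Fl i) e f} = G' := by
      intro e heJ
      rw [hFlJ]
      exact comp_of_nested hE hnest hAiN hAianti hAine (hFlJ ▸ heJ)
    have hGsubcomp : ∀ j : Fin k, G j ⊆ Fl i → ∀ e ∈ G j,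
        G j ⊆ {f | f ∈ Fl i ∧ ConnTo (M ↾ Fl i) e f} := by
      intro j hGF e he g hg
      exact ⟨hGF hg, connTo_mono_s13 hGF hFlE ((hGconn j).2 e he g hg)⟩
    constructor
    · intro C
      constructor
      · rintro ⟨e, heF, rfl⟩
        obtain ⟨G', ⟨j, hj, rfl⟩, hEq⟩ := hcomp e heF
        exact ⟨j, hj.1, hEq, hj.2⟩
      · rintro ⟨j, hj, rfl, hmax⟩
        obtain ⟨e, he⟩ : (G j).Nonempty := by
          have := (hGconn j).1; rwa [restrict_ground_eq] at this
        have heF : e ∈ Fl i := hGFl j hj he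
        refine ⟨e, heF, ?_⟩
        obtain ⟨G', hG'Ai, hEq⟩ := hcomp e heF
        obtain ⟨b, hb, rfl⟩ := hG'Ai
        have hsub : G j ⊆ G b := hEq ▸ hGsubcomp j (hGFl j hj) e he
        rw [hEq, ← hmax b hb.1 hsub]
    · apply Subset.antisymm
      · intro x hx
        obtain ⟨G', ⟨j, hj, rfl⟩, hEq⟩ := hcomp x hx
        have hxG : x ∈ {f | f ∈ Fl i ∧ ConnTo (M ↾ Fl i) x f} :=
          ⟨hx, Relation.ReflTransGen.refl⟩
        rw [hEq] at hxG
        exact mem_biUnion hj hxG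
      · refine iUnion₂_subset fun j hj => hGFl j hj.1
  exact ⟨fun i => (H i).1, fun i => (H i).2⟩


end BergmanPaper
end
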